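/- arXiv:math/0612807 — 8 statements merged into one kernel-verified Lean document; each statement's English description precedes it below -/
import Mathlib

section
/- Let τ ∈ ℂ with Im τ > 0 and let u, v ∈ ℝ be not both integers. Then there exist constants C > 0 and w₀ > 0 such that for all s ∈ [1,2] and all real numbers p > w ≥ w₀, the partial lattice sum h(w,s) := Σ_{(m,n)∈ℤ², w < |mτ+n|² < p} e^{2πi(mu+nv)} / |mτ+n|^{2s} satisfies |h(w,s)| ≤ C · w^{1/2 − s}; in particular the bound is uniform in s ∈ [1,2] and in p. -/
/-!
Write `e(x) = exp (2πix)`, so that the summand is `e(u)^m e(v)^n` times the weight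
`t ↦ 1_{w < t < p} t^(-s)` evaluated at `t = |mτ + n|²`. One of `e(u)`, `e(v)` is a nontrivial
character, say `z = e(v)` (otherwise swap `m` and `n`), and `|mτ + n|² = A (n + c m)² + d m²`.
For fixed `m` this is a unimodal function of `n` bounded below by `d m²`, so the weight, as a
function of `n`, has total variation at most `4 max(w, d m²)^(-s)`; Abel summation against `z^n`
bounds the inner sum over `n` by this variation divided by `|1 - z|`. Finally
`max(w, d m²)^(-s) ≤ 2 w^(1-s) / (w + d m²)` for `s ≥ 1`, and `∑ₘ 1 / (w + d m²) = O((d w)^(-1/2))`,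
which gives `O(w^(1/2 - s))`.
-/

open Finset Real

theorem one_sub_mul_sum_range_smul_pow (f : ℕ → ℝ) (z : ℂ) (N : ℕ) :
    (1 - z) * ∑ k ∈ range N, f k • z ^ k =
      (f 0 : ℂ) - f N • z ^ N + ∑ k ∈ range N, (f (k + 1) - f k) • z ^ (k + 1) := by
  induction N with
  | zero => simp
  | succ N ih =>
    rw [sum_range_succ, sum_range_succ, mul_add, ih]
    simp only [Complex.real_smul, Complex.ofReal_sub]
    ring

theorem norm_sum_range_smul_pow_mul_le {f : ℕ → ℝ} {z : ℂ} (hz : ‖z‖ ≤ 1) {N : ℕ}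
    (h0 : f 0 = 0) (hN : f N = 0) :
    ‖∑ k ∈ range N, f k • z ^ k‖ * ‖1 - z‖ ≤ ∑ k ∈ range N, |f (k + 1) - f k| := by
  rw [mul_comm, ← norm_mul, one_sub_mul_sum_range_smul_pow, h0, hN, zero_smul,
    Complex.ofReal_zero, sub_zero, zero_add]
  refine (norm_sum_le _ _).trans (sum_le_sum fun k _ => ?_)
  rw [norm_smul, norm_pow, Real.norm_eq_abs]
  exact mul_le_of_le_one_right (abs_nonneg _) (pow_le_one₀ (norm_nonneg _) hz)

theorem sum_range_abs_sub_le_of_unimodal {H : ℕ → ℝ} {M : ℝ} (k₀ N : ℕ)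
    (hanti : ∀ k < k₀, H (k + 1) ≤ H k) (hmono : ∀ k, k₀ ≤ k → H k ≤ H (k + 1))
    (hH : ∀ k, 0 ≤ H k ∧ H k ≤ M) :
    ∑ k ∈ range N, |H (k + 1) - H k| ≤ 2 * M := by
  have hj : min k₀ N ≤ N := min_le_right k₀ N
  have hleft : ∑ k ∈ range (min k₀ N), |H (k + 1) - H k| = H 0 - H (min k₀ N) := by
    rw [← sum_range_sub']
    refine sum_congr rfl fun k hk => ?_
    rw [abs_of_nonpos (sub_nonpos.2 (hanti k (by simp at hk; omega))), neg_sub]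
  have hright : ∑ k ∈ Ico (min k₀ N) N, |H (k + 1) - H k| = H N - H (min k₀ N) := by
    rw [← sum_Ico_sub _ hj]
    refine sum_congr rfl fun k hk => abs_of_nonneg (sub_nonneg.2 (hmono k ?_))
    simp only [mem_Ico] at hk
    omega
  rw [← sum_range_add_sum_Ico _ hj, hleft, hright]
  linarith [hH 0, hH N, hH (min k₀ N)]

theorem exists_tsum_smul_zpow_eq {f : ℤ → ℝ} (hf : f.support.Finite) {z : ℂ} (hz : z ≠ 0) :
    ∃ a : ℤ, ∃ N : ℕ, f a = 0 ∧ f (a + N) = 0 ∧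
      ∑' n, f n • z ^ n = z ^ a * ∑ k ∈ range N, f (a + k) • z ^ k := by
  obtain ⟨lo, hlo⟩ := hf.bddBelow
  obtain ⟨hi, hhi⟩ := hf.bddAbove
  have hout : ∀ n, (n < lo ∨ max lo hi < n) → f n = 0 := fun n hn => by
    by_contra h
    rcases hn with hn | hn
    · exact absurd (hlo h) (not_le.2 hn)
    · exact absurd (hhi h) (not_le.2 (lt_of_le_of_lt (le_max_right _ _) hn))
  refine ⟨lo - 1, (max lo hi - lo + 2).toNat, hout _ (by omega), hout _ (by omega), ?_⟩
  rw [tsum_eq_sum (s := (range (max lo hi - lo + 2).toNat).image fun k : ℕ => lo - 1 + k),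
    sum_image (fun _ _ _ _ h => by simpa using h), mul_sum]
  · refine sum_congr rfl fun k _ => ?_
    rw [zpow_add₀ hz, zpow_natCast, mul_smul_comm]
  · intro n hn
    rw [hout n ?_, zero_smul]
    by_contra h
    exact hn (mem_image.2 ⟨(n - (lo - 1)).toNat, mem_range.2 (by omega), by omega⟩)

theorem norm_tsum_prod_le {α β E : Type*} [NormedAddCommGroup E] {F : α × β → E}
    (hF : F.support.Finite) {b : α → ℝ} {C : ℝ} (hb : ∀ a, ‖∑' y, F (a, y)‖ ≤ b a)
    (hC : ∀ T : Finset α, ∑ a ∈ T, b a ≤ C) : ‖∑' x, F x‖ ≤ C := by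
  classical
  set S := hF.toFinset
  have hS : ∀ x, x ∉ S → F x = 0 := fun x h => by simpa [S] using h
  rw [tsum_eq_sum (s := S.image Prod.fst ×ˢ S.image Prod.snd) fun x h => hS x fun hx =>
    h (mem_product.2 ⟨mem_image_of_mem _ hx, mem_image_of_mem _ hx⟩), sum_product]
  refine (norm_sum_le _ _).trans ((sum_le_sum fun a _ => ?_).trans (hC _))
  have hslice : ∑' y, F (a, y) = ∑ y ∈ S.image Prod.snd, F (a, y) :=
    tsum_eq_sum fun y hy => hS _ fun h => hy (mem_image_of_mem Prod.snd h)
  exact hslice ▸ hb a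

theorem finite_setOf_mul_sq_add_lt {A : ℝ} (hA : 0 < A) (e r : ℝ) :
    {n : ℤ | A * (n + e) ^ 2 < r}.Finite := by
  refine (Set.finite_Icc ⌊-e - √(r / A)⌋ ⌈-e + √(r / A)⌉).subset fun n hn => ?_
  have hsq : (n + e) ^ 2 < r / A := by rw [lt_div_iff₀ hA]; linarith [hn.out]
  have habs : |(n : ℝ) + e| < √(r / A) := Real.lt_sqrt (abs_nonneg _) |>.2 (by rwa [sq_abs])
  rw [abs_lt] at habs
  constructor
  · exact Int.floor_le_iff.2 (by linarith)
  · exact Int.le_ceil_iff.2 (by linarith)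

theorem sum_range_inv_sq_add_sq_le {a : ℝ} (ha : 1 ≤ a) (K : ℕ) :
    ∑ k ∈ range K, 1 / (a ^ 2 + (k : ℝ) ^ 2) ≤ 8 / a := by
  have hterm : ∀ k : ℕ, 1 / (a ^ 2 + (k : ℝ) ^ 2) ≤ 8 * (1 / (a + k) - 1 / (a + (k + 1 : ℕ))) := by
    intro k
    have hk : (0 : ℝ) ≤ k := k.cast_nonneg
    -- `(a + k) (a + k + 1) ≤ (2a + k)² ≤ 8 (a² + k²)` since `a ≥ 1`
    push_cast
    rw [div_sub_div _ _ (by positivity) (by positivity), mul_div_assoc',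
      div_le_div_iff₀ (by positivity) (by positivity)]
    nlinarith
  calc ∑ k ∈ range K, 1 / (a ^ 2 + (k : ℝ) ^ 2)
      ≤ ∑ k ∈ range K, 8 * (1 / (a + k) - 1 / (a + (k + 1 : ℕ))) := sum_le_sum fun k _ => hterm k
    _ = 8 * (1 / a - 1 / (a + K)) := by
        rw [← mul_sum, sum_range_sub' (fun k : ℕ => 1 / (a + k)), Nat.cast_zero, add_zero]
    _ ≤ 8 / a := by
        have : 0 ≤ 1 / (a + K) := by positivity
        rw [mul_sub, mul_one_div]; linarith

theorem sum_inv_sq_add_sq_le {a : ℝ} (ha : 1 ≤ a) (S : Finset ℤ) :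
    ∑ m ∈ S, 1 / (a ^ 2 + (m : ℝ) ^ 2) ≤ 16 / a := by
  classical
  obtain ⟨K, hK⟩ := (S.image Int.natAbs).exists_nat_subset_range
  have hfiber : ∀ k : ℕ, #{m ∈ S | m.natAbs = k} ≤ 2 := fun k =>
    (card_le_card (t := {(k : ℤ), -(k : ℤ)}) fun m hm => by
      have h := Int.natAbs_eq m
      rw [(mem_filter.1 hm).2] at h
      rcases h with h | h <;> simp [h]).trans card_le_two
  calc ∑ m ∈ S, 1 / (a ^ 2 + (m : ℝ) ^ 2)
      = ∑ m ∈ S, 1 / (a ^ 2 + ((m.natAbs : ℕ) : ℝ) ^ 2) := by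
        simp only [Nat.cast_natAbs, Int.cast_abs, sq_abs]
    _ = ∑ k ∈ S.image Int.natAbs, #{m ∈ S | m.natAbs = k} • (1 / (a ^ 2 + (k : ℝ) ^ 2)) :=
        sum_comp (fun k : ℕ => 1 / (a ^ 2 + (k : ℝ) ^ 2)) _
    _ ≤ ∑ k ∈ range K, 2 * (1 / (a ^ 2 + (k : ℝ) ^ 2)) := by
        refine sum_le_sum_of_subset_of_nonneg hK (fun _ _ _ => by positivity) |>.trans' ?_
        refine sum_le_sum fun k _ => ?_
        rw [nsmul_eq_mul]
        gcongr
        exact_mod_cast hfiber k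
    _ ≤ 16 / a := by
        rw [← mul_sum]
        linarith [sum_range_inv_sq_add_sq_le ha K, show 16 / a = 2 * (8 / a) by ring]

theorem rpow_neg_le_two_mul_rpow_div {w q₀ s t : ℝ} (hw : 0 < w) (hq₀ : 0 ≤ q₀) (hs : 1 ≤ s)
    (hwt : w < t) (hq₀t : q₀ ≤ t) : t ^ (-s) ≤ 2 * w ^ (1 - s) / (w + q₀) := by
  have ht : 0 < t := hw.trans hwt
  have hrpow : t ^ (1 - s) ≤ w ^ (1 - s) := Real.rpow_le_rpow_of_nonpos hw hwt.le (by linarith)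
  rw [show -s = (1 - s) - 1 by ring, Real.rpow_sub_one ht.ne', div_le_div_iff₀ ht (by linarith)]
  nlinarith [Real.rpow_nonneg ht.le (1 - s)]

noncomputable def annulusWeight (w p s t : ℝ) : ℝ := if w < t ∧ t < p then t ^ (-s) else 0

theorem annulusWeight_eq_zero_of_le {w p s t : ℝ} (h : p ≤ t) : annulusWeight w p s t = 0 :=
  if_neg fun hc => (not_lt.2 h) hc.2

-- Increments of `annulusWeight` on `[q₀, ∞)` are dominated by those of this monotone function,
-- so the variation of the weight along a monotone sequence telescopes.
noncomputable def annulusMajorant (w p s B t : ℝ) : ℝ :=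
  (if w < t then 2 * B else 0) - annulusWeight w p s t

section annulus

variable {w p s q₀ B : ℝ}

theorem abs_annulusWeight_sub_le (hw : 0 ≤ w) (hs : 0 ≤ s)
    (hB : ∀ t, q₀ ≤ t → w < t → t ^ (-s) ≤ B) {t t' : ℝ} (ht : q₀ ≤ t) (htt' : t ≤ t') :
    |annulusWeight w p s t' - annulusWeight w p s t| ≤
      annulusMajorant w p s B t' - annulusMajorant w p s B t := by
  have hanti : ∀ {x y : ℝ}, w < x → x ≤ y → y ^ (-s) ≤ x ^ (-s) := fun hx hxy =>
    Real.rpow_le_rpow_of_nonpos (hw.trans_lt hx) hxy (neg_nonpos.2 hs)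
  have hpos : ∀ {x : ℝ}, w < x → 0 ≤ x ^ (-s) := fun hx => Real.rpow_nonneg (hw.trans hx.le) _
  unfold annulusMajorant annulusWeight
  rw [abs_le]
  by_cases h : w < t
  · have h' : w < t' := h.trans_le htt'
    have := hanti h htt'
    have := hB t ht h
    have := hpos h'
    simp only [h, h', true_and, if_true]
    split_ifs <;> constructor <;> linarith
  · by_cases h' : w < t'
    · have := hB t' (ht.trans htt') h'
      have := hpos h'
      split_ifs <;> constructor <;> linarith
    · split_ifs <;> constructor <;> linarith

theorem annulusMajorant_mem_Icc (hw : 0 ≤ w) (hB : ∀ t, q₀ ≤ t → w < t → t ^ (-s) ≤ B)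
    (hB0 : 0 ≤ B) {t : ℝ} (ht : q₀ ≤ t) :
    annulusMajorant w p s B t ∈ Set.Icc 0 (2 * B) := by
  unfold annulusMajorant annulusWeight
  by_cases h : w < t
  · have := hB t ht h
    have := Real.rpow_nonneg (hw.trans h.le) (-s)
    simp only [h, true_and, if_true]
    split_ifs <;> constructor <;> linarith
  · simp only [h, false_and, if_false]
    constructor <;> linarith

theorem abs_annulusWeight_sub_le_abs (hw : 0 ≤ w) (hs : 0 ≤ s)
    (hB : ∀ t, q₀ ≤ t → w < t → t ^ (-s) ≤ B) {t t' : ℝ} (ht : q₀ ≤ t) (ht' : q₀ ≤ t') :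
    |annulusWeight w p s t' - annulusWeight w p s t| ≤
      |annulusMajorant w p s B t' - annulusMajorant w p s B t| := by
  rcases le_total t t' with h | h
  · exact (abs_annulusWeight_sub_le hw hs hB ht h).trans (le_abs_self _)
  · rw [abs_sub_comm, abs_sub_comm (annulusMajorant _ _ _ _ _)]
    exact (abs_annulusWeight_sub_le hw hs hB ht' h).trans (le_abs_self _)

theorem norm_tsum_annulusWeight_smul_zpow_mul_le {z : ℂ} (hz : ‖z‖ = 1) {A e : ℝ} (hA : 0 < A)
    (hw : 0 ≤ w) (hs : 0 ≤ s) (hB : ∀ t, q₀ ≤ t → w < t → t ^ (-s) ≤ B) (hB0 : 0 ≤ B) :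
    ‖∑' n : ℤ, annulusWeight w p s (A * (n + e) ^ 2 + q₀) • z ^ n‖ * ‖1 - z‖ ≤ 4 * B := by
  have hfin : (Function.support fun n : ℤ =>
      annulusWeight w p s (A * (n + e) ^ 2 + q₀)).Finite := by
    refine (finite_setOf_mul_sq_add_lt hA e (p - q₀)).subset fun n hn => ?_
    by_contra h
    exact hn (annulusWeight_eq_zero_of_le (by linarith [not_lt.1 (Set.notMem_ofPred_iff.1 h)]))
  have hz0 : z ≠ 0 := by rintro rfl; simp at hz
  obtain ⟨a, N, ha, hN, hsum⟩ := exists_tsum_smul_zpow_eq hfin hz0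
  set Q : ℕ → ℝ := fun k => A * (((a + k : ℤ) : ℝ) + e) ^ 2 + q₀ with hQ
  have hQ₀ : ∀ k, q₀ ≤ Q k := fun k => by
    simp only [hQ]; nlinarith [sq_nonneg (((a + k : ℤ) : ℝ) + e)]
  have hQ_succ : ∀ k, Q (k + 1) - Q k = A * (2 * (a + k + e) + 1) := fun k => by
    simp only [hQ]; push_cast; ring
  have hmaj_mono : ∀ k, Q k ≤ Q (k + 1) →
      annulusMajorant w p s B (Q k) ≤ annulusMajorant w p s B (Q (k + 1)) := fun k h =>
    sub_nonneg.1 ((abs_nonneg _).trans (abs_annulusWeight_sub_le hw hs hB (hQ₀ k) h))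
  have hmaj_anti : ∀ k, Q (k + 1) ≤ Q k →
      annulusMajorant w p s B (Q (k + 1)) ≤ annulusMajorant w p s B (Q k) := fun k h =>
    sub_nonneg.1 ((abs_nonneg _).trans (abs_annulusWeight_sub_le hw hs hB (hQ₀ _) h))
  have h0 : annulusWeight w p s (Q 0) = 0 := by simpa [hQ] using ha
  rw [hsum, norm_mul, norm_zpow, hz, one_zpow, one_mul]
  calc _ ≤ ∑ k ∈ range N, |annulusWeight w p s (Q (k + 1)) - annulusWeight w p s (Q k)| :=
        norm_sum_range_smul_pow_mul_le (f := fun k => annulusWeight w p s (Q k)) hz.le h0 hN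
    _ ≤ ∑ k ∈ range N,
          |annulusMajorant w p s B (Q (k + 1)) - annulusMajorant w p s B (Q k)| :=
        sum_le_sum fun k _ => abs_annulusWeight_sub_le_abs hw hs hB (hQ₀ k) (hQ₀ (k + 1))
    _ ≤ 2 * (2 * B) := by
        refine sum_range_abs_sub_le_of_unimodal ⌈-(a + e) - 1 / 2⌉₊ N (fun k hk => ?_)
          (fun k hk => ?_) fun k => annulusMajorant_mem_Icc hw hB hB0 (hQ₀ k)
        · have := Nat.lt_ceil.1 hk
          exact hmaj_anti k (by nlinarith [hQ_succ k])
        · have := Nat.ceil_le.1 hk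
          exact hmaj_mono k (by nlinarith [hQ_succ k])
    _ = 4 * B := by ring

end annulus

noncomputable def binaryForm (A c d : ℝ) (m n : ℤ) : ℝ := A * (n + c * m) ^ 2 + d * m ^ 2

theorem finite_setOf_binaryForm_lt {A d : ℝ} (hA : 0 < A) (hd : 0 < d) (c p : ℝ) :
    {mn : ℤ × ℤ | binaryForm A c d mn.1 mn.2 < p}.Finite := by
  refine ((finite_setOf_mul_sq_add_lt hd 0 p).biUnion fun m _ =>
    (finite_setOf_mul_sq_add_lt hA (c * m) p).image (Prod.mk m)).subset ?_
  rintro ⟨m, n⟩ h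
  have h' : A * (n + c * m) ^ 2 + d * m ^ 2 < p := h
  simp only [Set.mem_iUnion, Set.mem_image]
  refine ⟨m, ?_, n, ?_, rfl⟩
  · show d * ((m : ℝ) + 0) ^ 2 < p
    nlinarith [sq_nonneg ((n : ℝ) + c * m)]
  · show A * ((n : ℝ) + c * m) ^ 2 < p
    nlinarith [sq_nonneg (m : ℝ)]

theorem norm_tsum_annulusWeight_binaryForm_smul_zpow_mul_le {z : ℂ} (hz : ‖z‖ = 1)
    {A c d w p s : ℝ} (hA : 0 < A) (hd : 0 ≤ d) (hw : 0 < w) (hs : 1 ≤ s) (m : ℤ) :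
    ‖∑' n : ℤ, annulusWeight w p s (binaryForm A c d m n) • z ^ n‖ * ‖1 - z‖
      ≤ 8 * w ^ (1 - s) / (w + d * m ^ 2) := by
  have hB := norm_tsum_annulusWeight_smul_zpow_mul_le hz (p := p) (e := c * m) (q₀ := d * m ^ 2)
    hA hw.le (by linarith)
    (fun t ht hwt => rpow_neg_le_two_mul_rpow_div hw (by positivity) hs hwt ht) (by positivity)
  unfold binaryForm
  convert hB using 1
  ring

theorem norm_tsum_annulusWeight_binaryForm_le {z ζ : ℂ} (hz : ‖z‖ = 1) (hz1 : z ≠ 1)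
    (hζ : ‖ζ‖ = 1) {A c d w p s : ℝ} (hA : 0 < A) (hd : 0 < d) (hdw : d ≤ w) (hs : 1 ≤ s) :
    ‖∑' mn : ℤ × ℤ, annulusWeight w p s (binaryForm A c d mn.1 mn.2) • (ζ ^ mn.1 * z ^ mn.2)‖
      ≤ 128 / (√d * ‖1 - z‖) * w ^ (1 / 2 - s) := by
  have hw : 0 < w := hd.trans_le hdw
  have hz1' : 0 < ‖1 - z‖ := norm_pos_iff.2 (sub_ne_zero.2 (Ne.symm hz1))
  set a := √w / √d
  have ha : 1 ≤ a := by
    rw [le_div_iff₀ (Real.sqrt_pos.2 hd), one_mul]; exact Real.sqrt_le_sqrt hdw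
  have hsupp : (Function.support fun mn : ℤ × ℤ =>
      annulusWeight w p s (binaryForm A c d mn.1 mn.2) • (ζ ^ mn.1 * z ^ mn.2)).Finite :=
    (finite_setOf_binaryForm_lt hA hd c p).subset fun mn hmn => by
    by_contra h
    exact hmn (by simp only [annulusWeight_eq_zero_of_le (not_lt.1 h), zero_smul])
  refine norm_tsum_prod_le hsupp (b := fun m : ℤ =>
    8 * w ^ (1 - s) / (d * ‖1 - z‖) * (1 / (a ^ 2 + (m : ℝ) ^ 2))) (fun m => ?_) fun T => ?_
  · have hslice : ∀ n : ℤ, annulusWeight w p s (binaryForm A c d m n) • (ζ ^ m * z ^ n) =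
        ζ ^ m * (annulusWeight w p s (binaryForm A c d m n) • z ^ n) := fun n =>
      (mul_smul_comm _ _ _).symm
    rw [tsum_congr hslice, tsum_mul_left, norm_mul, norm_zpow, hζ, one_zpow, one_mul]
    refine ((le_div_iff₀ hz1').2
      (norm_tsum_annulusWeight_binaryForm_smul_zpow_mul_le hz hA hd.le hw hs m)).trans_eq ?_
    rw [div_pow, Real.sq_sqrt hw.le, Real.sq_sqrt hd.le]
    field_simp
  · have hw' : w ^ (1 - s) = w ^ (1 / 2 - s) * √w := by
      rw [Real.sqrt_eq_rpow, ← Real.rpow_add hw]; ring_nf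
    have hd' : d = √d * √d := (Real.mul_self_sqrt hd.le).symm
    calc _ = 8 * w ^ (1 - s) / (d * ‖1 - z‖) * ∑ m ∈ T, 1 / (a ^ 2 + (m : ℝ) ^ 2) :=
          (mul_sum _ _ _).symm
      _ ≤ 8 * w ^ (1 - s) / (d * ‖1 - z‖) * (16 / a) := by
          gcongr; exact sum_inv_sq_add_sq_le ha _
      _ = 128 / (√d * ‖1 - z‖) * w ^ (1 / 2 - s) := by
          rw [hw']
          nth_rewrite 1 [hd']
          simp only [a]
          field_simp
          norm_num

theorem norm_sq_intCast_mul_add_eq_binaryForm (τ : ℂ) (m n : ℤ) :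
    ‖(m : ℂ) * τ + n‖ ^ 2 = binaryForm 1 τ.re (τ.im ^ 2) m n := by
  rw [Complex.sq_norm, Complex.normSq_apply, binaryForm]
  simp only [Complex.add_re, Complex.add_im, Complex.mul_re, Complex.mul_im, Complex.intCast_re,
    Complex.intCast_im]
  ring

theorem norm_sq_intCast_mul_add_eq_binaryForm_swap {τ : ℂ} (hτ : τ ≠ 0) (m n : ℤ) :
    ‖(m : ℂ) * τ + n‖ ^ 2 = binaryForm (‖τ‖ ^ 2) (τ.re / ‖τ‖ ^ 2) (τ.im ^ 2 / ‖τ‖ ^ 2) n m := by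
  have hN : ‖τ‖ ^ 2 = τ.re ^ 2 + τ.im ^ 2 := by
    rw [Complex.sq_norm, Complex.normSq_apply]; ring
  have hN0 : τ.re ^ 2 + τ.im ^ 2 ≠ 0 := by rw [← hN]; positivity
  rw [norm_sq_intCast_mul_add_eq_binaryForm, binaryForm, binaryForm, hN]
  field_simp
  ring

theorem exists_norm_tsum_lattice_le {τ : ℂ} (hτ : 0 < τ.im) {ζ z : ℂ} (hζ : ‖ζ‖ = 1)
    (hz : ‖z‖ = 1) (hζz : ζ ≠ 1 ∨ z ≠ 1) :
    ∃ C > (0 : ℝ), ∃ w₀ > (0 : ℝ), ∀ s, 1 ≤ s → ∀ w, w₀ ≤ w → ∀ p,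
      ‖∑' mn : ℤ × ℤ, annulusWeight w p s (‖(mn.1 : ℂ) * τ + mn.2‖ ^ 2) • (ζ ^ mn.1 * z ^ mn.2)‖
        ≤ C * w ^ (1 / 2 - s) := by
  have hτ0 : τ ≠ 0 := by rintro rfl; simp at hτ
  rcases hζz with hζ1 | hz1
  · have hζ1' : 0 < ‖1 - ζ‖ := norm_pos_iff.2 (sub_ne_zero.2 (Ne.symm hζ1))
    refine ⟨128 / (√(τ.im ^ 2 / ‖τ‖ ^ 2) * ‖1 - ζ‖), by positivity, τ.im ^ 2 / ‖τ‖ ^ 2,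
      by positivity, fun s hs w hw p => ?_⟩
    rw [← (Equiv.prodComm ℤ ℤ).tsum_eq]
    simp only [Equiv.prodComm_apply, Prod.fst_swap, Prod.snd_swap,
      norm_sq_intCast_mul_add_eq_binaryForm_swap hτ0, mul_comm (ζ ^ (_ : ℤ))]
    exact norm_tsum_annulusWeight_binaryForm_le hζ hζ1 hz (by positivity) (by positivity) hw hs
  · have hz1' : 0 < ‖1 - z‖ := norm_pos_iff.2 (sub_ne_zero.2 (Ne.symm hz1))
    refine ⟨128 / (√(τ.im ^ 2) * ‖1 - z‖), by positivity, τ.im ^ 2, by positivity,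
      fun s hs w hw p => ?_⟩
    simp only [norm_sq_intCast_mul_add_eq_binaryForm]
    exact norm_tsum_annulusWeight_binaryForm_le hz hz1 hζ one_pos (by positivity) hw hs

theorem ite_div_rpow_eq_annulusWeight_smul {w p s r : ℝ} (hr : 0 ≤ r) (E : ℂ) :
    (if w < r ^ 2 ∧ r ^ 2 < p then E / ((r ^ (2 * s) : ℝ) : ℂ) else 0) =
      annulusWeight w p s (r ^ 2) • E := by
  unfold annulusWeight
  split_ifs
  · rw [Complex.real_smul, div_eq_inv_mul, ← Complex.ofReal_inv, Real.rpow_neg (sq_nonneg r),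
      Real.rpow_mul hr, Real.rpow_two]
  · rw [zero_smul]

theorem norm_exp_two_pi_I_mul (x : ℝ) : ‖Complex.exp (2 * π * Complex.I * x)‖ = 1 := by
  rw [show 2 * π * Complex.I * x = ((2 * π * x : ℝ) : ℂ) * Complex.I by push_cast; ring]
  exact Complex.norm_exp_ofReal_mul_I _

theorem exp_two_pi_I_mul_ne_one {x : ℝ} (hx : ¬∃ a : ℤ, (a : ℝ) = x) :
    Complex.exp (2 * π * Complex.I * x) ≠ 1 := by
  rw [Ne, Complex.exp_eq_one_iff]
  rintro ⟨a, ha⟩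
  refine hx ⟨a, Complex.ofReal_injective ?_⟩
  have h2πI : 2 * π * Complex.I ≠ 0 := by simp [Real.pi_ne_zero]
  push_cast
  exact mul_left_cancel₀ h2πI (by rw [ha]; ring)

theorem exp_two_pi_I_mul_lattice (u v : ℝ) (m n : ℤ) :
    Complex.exp (2 * π * Complex.I * ((m * u + n * v : ℝ) : ℂ)) =
      Complex.exp (2 * π * Complex.I * u) ^ m * Complex.exp (2 * π * Complex.I * v) ^ n := by
  rw [← Complex.exp_int_mul, ← Complex.exp_int_mul, ← Complex.exp_add]
  push_cast
  ring_nf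

/-- uniform bound for tail pieces of the twisted lattice sum
`h(w,s) = ∑_{w < |mτ+n|² < p} e^{2πi(mu+nv)}/|mτ+n|^{2s}`:
there are `C > 0` and `w₀ > 0` with `|h(w,s)| ≤ C · w^{1/2 - s}`
for all `s ∈ [1,2]` and all `p > w ≥ w₀`. -/
theorem lattice_tail_bound (τ : ℂ) (hτ : 0 < τ.im) (u v : ℝ)
    (huv : ¬((∃ a : ℤ, (a : ℝ) = u) ∧ (∃ b : ℤ, (b : ℝ) = v))) :
    ∃ C > (0 : ℝ), ∃ w₀ > (0 : ℝ), ∀ s : ℝ, s ∈ Set.Icc (1 : ℝ) 2 →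
      ∀ w p : ℝ, w₀ ≤ w → w < p →
        ‖(∑' mn : ℤ × ℤ,
            if w < ‖(mn.1 : ℂ) * τ + (mn.2 : ℂ)‖ ^ 2 ∧
                ‖(mn.1 : ℂ) * τ + (mn.2 : ℂ)‖ ^ 2 < p then
              Complex.exp (2 * (Real.pi : ℂ) * Complex.I *
                  (((mn.1 : ℝ) * u + (mn.2 : ℝ) * v : ℝ) : ℂ)) /
                ((‖(mn.1 : ℂ) * τ + (mn.2 : ℂ)‖ ^ (2 * s) : ℝ) : ℂ)
            else 0)‖
          ≤ C * w ^ ((1 : ℝ) / 2 - s) := by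
  obtain ⟨C, hC, w₀, hw₀, h⟩ := exists_norm_tsum_lattice_le hτ (norm_exp_two_pi_I_mul u)
    (norm_exp_two_pi_I_mul v)
    ((not_and_or.1 huv).imp exp_two_pi_I_mul_ne_one exp_two_pi_I_mul_ne_one)
  refine ⟨C, hC, w₀, hw₀, fun s hs w p hw _ => ?_⟩
  simp only [ite_div_rpow_eq_annulusWeight_smul (norm_nonneg _), exp_two_pi_I_mul_lattice]
  exact h s hs.1 w hw p
end

section
/- Let Λ = ℤ ⊕ ℤτ ⊂ ℂ be a lattice with Im τ > 0. Then there exist a real constant η_Λ and a constant C > 0 such that for all x ≥ 1, | Σ_{μ∈Λ, μ≠0, |μ|²≤x} 1/|μ|² − (π / Im τ)·(log x + η_Λ) | ≤ C · x^{−1/2}. -/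
/-!
Let `N(t)` be the number of `(m, n) ∈ ℤ²` with `‖mτ + n‖² ≤ t`. Counting row by row, the row at
height `m Im τ` is an integer interval of length `2√(t - (m Im τ)²) + O(1)`, and comparing the sum
of these lengths with the area integral gives the Gauss circle bound `N(t) = π t / Im τ + O(√t)`.
Abel summation writes the sum of `1 / ‖μ‖²` over the disc as `N(x) / x + ∫₁ˣ N(t) / t² dt` plus a
constant. The main term `π t / Im τ` of `N` contributes `(π / Im τ) log x`; the error term
`O(√t) / t²` is integrable on `(1, ∞)`, its integral goes into the constant `η`, and its tail beyond
`x` as well as the boundary term `O(√x) / x` are `O(x^{-1/2})`.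
-/

open MeasureTheory Set Real
open scoped Finset

theorem abs_le_sqrt_iff {u y : ℝ} (hy : 0 ≤ y) : |u| ≤ √y ↔ u ^ 2 ≤ y := by
  rw [← sqrt_sq_eq_abs, sqrt_le_sqrt_iff hy]

theorem sq_add_sq_le_iff {u v x : ℝ} :
    u ^ 2 + v ^ 2 ≤ x ↔ v ^ 2 ≤ x ∧ |u| ≤ √(x - v ^ 2) := by
  constructor
  · intro h
    have hv : v ^ 2 ≤ x := by nlinarith [sq_nonneg u]
    exact ⟨hv, (abs_le_sqrt_iff (sub_nonneg.2 hv)).2 (by linarith)⟩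
  · rintro ⟨hv, hu⟩
    linarith [(abs_le_sqrt_iff (sub_nonneg.2 hv)).1 hu]

theorem mem_Icc_neg_natFloor_iff {m : ℤ} {R : ℝ} (hR : 0 ≤ R) :
    m ∈ Finset.Icc (-⌊R⌋₊ : ℤ) ⌊R⌋₊ ↔ |(m : ℝ)| ≤ R := by
  rw [Finset.mem_Icc, ← abs_le, Int.natCast_floor_eq_floor hR, Int.le_floor, Int.cast_abs]

theorem mem_Icc_ceil_floor_iff {n : ℤ} {c s : ℝ} :
    n ∈ Finset.Icc ⌈-c - s⌉ ⌊c - s⌋ ↔ |n + s| ≤ c := by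
  rw [Finset.mem_Icc, Int.ceil_le, Int.le_floor, abs_le]
  constructor <;> rintro ⟨h₁, h₂⟩ <;> constructor <;> linarith

theorem abs_card_Icc_ceil_floor_sub_le {l u : ℝ} (h : l ≤ u) :
    |(#(Finset.Icc ⌈l⌉ ⌊u⌋) : ℝ) - (u - l)| ≤ 1 := by
  have hle : ⌈l⌉ ≤ ⌊u⌋ + 1 := (Int.ceil_le_floor_add_one l).trans (by gcongr)
  have hcard : (#(Finset.Icc ⌈l⌉ ⌊u⌋) : ℤ) = ⌊u⌋ + 1 - ⌈l⌉ := by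
    rw [Int.card_Icc, Int.toNat_of_nonneg (by omega)]
  rw [← Int.cast_natCast, hcard, abs_le]
  push_cast
  constructor <;>
    linarith [Int.floor_le u, Int.lt_floor_add_one u, Int.le_ceil l, Int.ceil_lt_add_one l]

theorem abs_sum_range_sub_integral_le {g : ℝ → ℝ} {R : ℝ} (hR : 0 ≤ R)
    (hg : AntitoneOn g (Icc 0 R)) (hg0 : ∀ t ∈ Icc 0 R, 0 ≤ g t) :
    |∑ m ∈ Finset.range (⌊R⌋₊ + 1), g m - ∫ t in 0..R, g t| ≤ g 0 := by
  set n := ⌊R⌋₊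
  have hnR : (n : ℝ) ≤ R := Nat.floor_le hR
  have hRn : R ≤ n + 1 := (Nat.lt_floor_add_one R).le
  have hn : (n : ℝ) ∈ Icc 0 R := ⟨n.cast_nonneg, hnR⟩
  have hint {a b : ℝ} (ha : a ∈ Icc 0 R) (hb : b ∈ Icc 0 R) : IntervalIntegrable g volume a b :=
    (hg.mono (uIcc_subset_Icc ha hb)).intervalIntegrable
  have hsplit : ∫ t in 0..R, g t = (∫ t in 0..(n : ℝ), g t) + ∫ t in (n : ℝ)..R, g t :=
    (intervalIntegral.integral_add_adjacent_intervals (hint ⟨le_rfl, hR⟩ hn)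
      (hint hn ⟨hR, le_rfl⟩)).symm
  have htail_nonneg : 0 ≤ ∫ t in (n : ℝ)..R, g t :=
    intervalIntegral.integral_nonneg hnR fun t ht => hg0 t ⟨hn.1.trans ht.1, ht.2⟩
  have htail_le : ∫ t in (n : ℝ)..R, g t ≤ g 0 :=
    calc ∫ t in (n : ℝ)..R, g t ≤ ∫ _ in (n : ℝ)..R, g 0 :=
          intervalIntegral.integral_mono_on hnR (hint hn ⟨hR, le_rfl⟩) intervalIntegrable_const
            fun t ht => hg ⟨le_rfl, hR⟩ ⟨hn.1.trans ht.1, ht.2⟩ (hn.1.trans ht.1)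
      _ = (R - n) * g 0 := by simp
      _ ≤ 1 * g 0 := by gcongr; exact hg0 0 ⟨le_rfl, hR⟩; linarith
      _ = g 0 := one_mul _
  have hgn : AntitoneOn g (Icc 0 (0 + n)) := hg.mono (Icc_subset_Icc_right (by simpa using hnR))
  have hupper := hgn.sum_le_integral
  have hlower := hgn.integral_le_sum
  simp only [zero_add] at hupper hlower
  have hlast : ∑ m ∈ Finset.range n, g m ≤ ∑ m ∈ Finset.range (n + 1), g m := by
    rw [Finset.sum_range_succ]
    linarith [hg0 n hn]
  rw [Finset.sum_range_succ', Nat.cast_zero] at hlast ⊢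
  rw [abs_le, hsplit]
  constructor <;> linarith

theorem abs_sum_Icc_sub_integral_le {g : ℝ → ℝ} {R : ℝ} (hR : 0 ≤ R) (heven : g.Even)
    (hg : AntitoneOn g (Icc 0 R)) (hg0 : ∀ t ∈ Icc 0 R, 0 ≤ g t) :
    |∑ m ∈ Finset.Icc (-⌊R⌋₊ : ℤ) ⌊R⌋₊, g m - ∫ t in -R..R, g t| ≤ 3 * g 0 := by
  have hint : IntervalIntegrable g volume 0 R :=
    (hg.mono (uIcc_of_le hR).subset).intervalIntegrable
  have hsymm : ∫ t in -R..0, g t = ∫ t in 0..R, g t := by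
    simpa [heven _] using (intervalIntegral.integral_comp_neg (a := 0) (b := R) g).symm
  have hintneg : IntervalIntegrable g volume (-R) 0 := by
    simpa [heven _] using ((IntervalIntegrable.iff_comp_neg).mp hint).symm
  rw [Finset.sum_Icc_of_even_eq_range (fun m => by simpa using heven m),
    ← intervalIntegral.integral_add_adjacent_intervals hintneg hint, hsymm, Int.cast_zero]
  have hhalf := abs_le.mp (abs_sum_range_sub_integral_le hR hg hg0)
  rw [abs_le, two_nsmul]
  simp only [Int.cast_natCast]
  constructor <;> linarith [hg0 0 ⟨le_rfl, hR⟩]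

theorem integral_sqrt_sub_mul_sq {b x : ℝ} (hb : 0 < b) (hx : 0 ≤ x) :
    ∫ t in -(√x / b)..√x / b, √(x - (t * b) ^ 2) = π * x / (2 * b) := by
  have hscale (s : ℝ) : √(x - (√x / b * s * b) ^ 2) = √x * √(1 - s ^ 2) := by
    rw [← sqrt_mul hx, div_mul_eq_mul_div, div_mul_eq_mul_div, mul_div_assoc, div_self hb.ne',
      mul_one, mul_pow, sq_sqrt hx]
    ring_nf
  have := intervalIntegral.mul_integral_comp_mul_left (a := -1) (b := 1) (c := √x / b)
    (f := fun t => √(x - (t * b) ^ 2))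
  simp only [hscale, intervalIntegral.integral_const_mul, integral_sqrt_one_sub_sq, mul_neg,
    mul_one] at this
  rw [← this]
  field_simp
  rw [sq_sqrt hx]

theorem integral_one_div_sq {a b : ℝ} (ha : 0 < a) (hab : a ≤ b) :
    ∫ t in a..b, 1 / t ^ 2 = 1 / a - 1 / b := by
  have h0 : (0 : ℝ) ∉ uIcc a b := by
    rw [uIcc_of_le hab]; exact fun h => h.1.not_gt ha
  simp_rw [one_div, ← zpow_natCast, ← zpow_neg]
  rw [integral_zpow (Or.inr ⟨by norm_num, h0⟩)]
  norm_num
  ring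

theorem ite_mem_Ioc_one_div_eq {q x y : ℝ} (hy : 0 < y) (hyx : y ≤ x) :
    (if q ∈ Ioc y x then 1 / q else 0) =
      (if q ≤ x then 1 / x else 0) - (if q ≤ y then 1 / y else 0) +
        ∫ t in y..x, (Ici q).indicator (fun t => 1 / t ^ 2) t := by
  rw [intervalIntegral.integral_of_le hyx, setIntegral_indicator measurableSet_Ici]
  rcases le_or_gt q y with hqy | hyq
  · have hs : Ioc y x ∩ Ici q = Ioc y x := inter_eq_left.2 fun t ht => hqy.trans ht.1.le
    rw [hs, ← intervalIntegral.integral_of_le hyx, integral_one_div_sq hy hyx]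
    simp [hqy, hqy.trans hyx, hqy.not_gt]
  rcases le_or_gt q x with hqx | hxq
  · have hs : Ioc y x ∩ Ici q = Icc q x := by
      ext t
      exact ⟨fun ⟨⟨_, htx⟩, hqt⟩ => ⟨hqt, htx⟩,
        fun ⟨hqt, htx⟩ => ⟨⟨hyq.trans_le hqt, htx⟩, hqt⟩⟩
    rw [hs, integral_Icc_eq_integral_Ioc, ← intervalIntegral.integral_of_le hqx,
      integral_one_div_sq (hy.trans hyq) hqx]
    simp [hqx, hyq.not_ge, hyq]
  · have hs : Ioc y x ∩ Ici q = ∅ :=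
      eq_empty_of_forall_notMem fun t ⟨⟨_, htx⟩, hqt⟩ => (htx.trans_lt hxq).not_ge hqt
    simp [hs, hxq.not_ge, hyq.not_ge]

theorem sum_filter_one_div_eq {ι : Type*} (s : Finset ι) (q : ι → ℝ) {x y : ℝ} (hy : 0 < y)
    (hyx : y ≤ x) :
    ∑ i ∈ s with q i ∈ Ioc y x, 1 / q i =
      #{i ∈ s | q i ≤ x} / x - #{i ∈ s | q i ≤ y} / y +
        ∫ t in y..x, (#{i ∈ s | q i ≤ t} : ℝ) / t ^ 2 := by
  have hint (i : ι) :
      IntervalIntegrable ((Ici (q i)).indicator fun t => 1 / t ^ 2) volume y x := by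
    have hcont : ContinuousOn (fun t : ℝ => 1 / t ^ 2) (uIcc y x) := by
      refine continuousOn_const.div (continuousOn_pow 2) fun t ht => ?_
      rw [uIcc_of_le hyx] at ht
      exact pow_ne_zero 2 (hy.trans_le ht.1).ne'
    have := hcont.intervalIntegrable (μ := volume)
    rw [intervalIntegrable_iff] at this ⊢
    exact this.indicator measurableSet_Ici
  have hcount (t : ℝ) :
      ∑ i ∈ s, (Ici (q i)).indicator (fun t => 1 / t ^ 2) t = #{i ∈ s | q i ≤ t} / t ^ 2 := by
    rw [Finset.sum_indicator_eq_sum_filter]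
    simp [div_eq_mul_inv]
  rw [Finset.sum_filter, Finset.sum_congr rfl fun i _ => ite_mem_Ioc_one_div_eq hy hyx,
    Finset.sum_add_distrib, Finset.sum_sub_distrib,
    ← intervalIntegral.integral_finsetSum fun i _ => hint i]
  simp only [hcount, ← Finset.sum_filter, Finset.sum_const, nsmul_eq_mul, mul_one_div]

theorem abs_setIntegral_Ioi_le_of_abs_le_rpow {F : ℝ → ℝ} {C x : ℝ} (hx : 0 < x)
    (hF : ∀ t > x, |F t| ≤ C * t ^ (-(3 : ℝ) / 2)) :
    |∫ t in Ioi x, F t| ≤ 2 * C * x ^ (-(1 : ℝ) / 2) := by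
  have hbound : Integrable (fun t => C * t ^ (-(3 : ℝ) / 2)) (volume.restrict (Ioi x)) :=
    (integrableOn_Ioi_rpow_of_lt (by norm_num) hx).const_mul C
  calc |∫ t in Ioi x, F t| ≤ ∫ t in Ioi x, C * t ^ (-(3 : ℝ) / 2) :=
        (Real.norm_eq_abs _).symm.trans_le <| norm_integral_le_of_norm_le hbound <|
          (ae_restrict_mem measurableSet_Ioi).mono fun t ht => hF t ht
    _ = 2 * C * x ^ (-(1 : ℝ) / 2) := by
        rw [integral_const_mul, integral_Ioi_rpow_of_lt (by norm_num) hx]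
        norm_num
        ring

theorem sqrt_div_pow_eq_rpow {t : ℝ} (ht : 0 < t) (n : ℕ) :
    √t / t ^ n = t ^ ((1 : ℝ) / 2 - n) := by
  rw [sqrt_eq_rpow, rpow_sub ht, rpow_natCast]

theorem integral_div_sq_eq_mul_log_add {N : ℝ → ℝ} {κ x : ℝ} (hx : 1 ≤ x)
    (hint : IntegrableOn (fun t => (N t - κ * t) / t ^ 2) (Ioi 1)) :
    ∫ t in (1 : ℝ)..x, N t / t ^ 2 =
      κ * log x + ((∫ t in Ioi 1, (N t - κ * t) / t ^ 2) -
        ∫ t in Ioi x, (N t - κ * t) / t ^ 2) := by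
  have h0 : (0 : ℝ) ∉ uIcc 1 x := by
    rw [uIcc_of_le hx]; exact fun h => h.1.not_gt one_pos
  have hEq : EqOn (fun t => N t / t ^ 2) (fun t => (N t - κ * t) / t ^ 2 + κ * (1 / t))
      (uIcc 1 x) := by
    intro t ht
    have : t ≠ 0 := fun h => h0 (h ▸ ht)
    field_simp
    ring
  have hint' : IntervalIntegrable (fun t => (N t - κ * t) / t ^ 2) volume 1 x :=
    (intervalIntegrable_iff_integrableOn_Ioc_of_le hx).2 (hint.mono_set Ioc_subset_Ioi_self)
  have hinv : IntervalIntegrable (fun t => κ * (1 / t)) volume 1 x :=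
    (continuousOn_const.mul (continuousOn_const.div continuousOn_id
      fun t ht h => h0 (h ▸ ht))).intervalIntegrable
  rw [intervalIntegral.integral_congr hEq, intervalIntegral.integral_add hint' hinv,
    intervalIntegral.integral_const_mul, integral_one_div h0, div_one,
    intervalIntegral.integral_Ioi_sub_Ioi hint hx, add_comm]

theorem exists_abs_div_add_integral_sub_log_le {N : ℝ → ℝ}
    (hN : AEMeasurable N (volume.restrict (Ioi 1))) {κ C : ℝ}
    (hE : ∀ t, 1 ≤ t → |N t - κ * t| ≤ C * √t) :
    ∃ c, ∀ x, 1 ≤ x →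
      |N x / x + (∫ t in (1 : ℝ)..x, N t / t ^ 2) - (κ * log x + c)| ≤
        3 * C * x ^ (-(1 : ℝ) / 2) := by
  set F : ℝ → ℝ := fun t => (N t - κ * t) / t ^ 2
  have hF_le : ∀ t > 1, |F t| ≤ C * t ^ (-(3 : ℝ) / 2) := by
    intro t ht
    have ht0 : 0 < t := one_pos.trans ht
    rw [abs_div, abs_of_pos (pow_pos ht0 2), show -(3 : ℝ) / 2 = 1 / 2 - (2 : ℕ) by norm_num,
      ← sqrt_div_pow_eq_rpow ht0, mul_div_assoc']
    exact div_le_div_of_nonneg_right (hE t ht.le) (by positivity)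
  have hF_int : IntegrableOn F (Ioi 1) :=
    Integrable.mono' ((integrableOn_Ioi_rpow_of_lt (by norm_num) one_pos).const_mul C)
      (by fun_prop : AEMeasurable F _).aestronglyMeasurable
      ((ae_restrict_mem measurableSet_Ioi).mono fun t ht => hF_le t ht)
  refine ⟨κ + ∫ t in Ioi 1, F t, fun x hx => ?_⟩
  have hx0 : 0 < x := one_pos.trans_le hx
  have hmain : |(N x - κ * x) / x| ≤ C * x ^ (-(1 : ℝ) / 2) := by
    rw [abs_div, abs_of_pos hx0, show -(1 : ℝ) / 2 = 1 / 2 - (1 : ℕ) by norm_num,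
      ← sqrt_div_pow_eq_rpow hx0, pow_one, mul_div_assoc']
    exact div_le_div_of_nonneg_right (hE x hx) hx0.le
  have htail := abs_setIntegral_Ioi_le_of_abs_le_rpow hx0 fun t ht => hF_le t (hx.trans_lt ht)
  have hNx : N x / x = κ + (N x - κ * x) / x := by field_simp; ring
  have hrw : N x / x + (∫ t in (1 : ℝ)..x, N t / t ^ 2) - (κ * log x + (κ + ∫ t in Ioi 1, F t)) =
      (N x - κ * x) / x - ∫ t in Ioi x, F t := by
    rw [hNx, integral_div_sq_eq_mul_log_add hx hF_int]
    ring
  rw [hrw]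
  calc _ ≤ |(N x - κ * x) / x| + |∫ t in Ioi x, F t| := abs_sub _ _
    _ ≤ _ := by linarith

noncomputable def latticeNormSq (τ : ℂ) (p : ℤ × ℤ) : ℝ := ‖(p.1 : ℂ) * τ + p.2‖ ^ 2

theorem latticeNormSq_eq (τ : ℂ) (p : ℤ × ℤ) :
    latticeNormSq τ p = (p.2 + p.1 * τ.re) ^ 2 + (p.1 * τ.im) ^ 2 := by
  rw [latticeNormSq, Complex.sq_norm, Complex.normSq_apply]
  simp only [Complex.add_re, Complex.mul_re, Complex.intCast_re, Complex.intCast_im, zero_mul,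
    sub_zero, Complex.add_im, Complex.mul_im, add_zero]
  ring

/-- The points `(m, n)` with `‖mτ + n‖² ≤ x` (see `mem_latticeDisc`), listed row by row so that
the cardinality is a sum of lengths of integer intervals. -/
noncomputable def latticeDisc (τ : ℂ) (x : ℝ) : Finset (ℤ × ℤ) :=
  (Finset.Icc (-⌊√x / τ.im⌋₊ : ℤ) ⌊√x / τ.im⌋₊).biUnion fun m =>
    (Finset.Icc ⌈-√(x - (m * τ.im) ^ 2) - m * τ.re⌉ ⌊√(x - (m * τ.im) ^ 2) - m * τ.re⌋).map
      (Function.Embedding.sectR m ℤ)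

theorem card_latticeDisc (τ : ℂ) (x : ℝ) :
    #(latticeDisc τ x) = ∑ m ∈ Finset.Icc (-⌊√x / τ.im⌋₊ : ℤ) ⌊√x / τ.im⌋₊,
      #(Finset.Icc ⌈-√(x - (m * τ.im) ^ 2) - m * τ.re⌉ ⌊√(x - (m * τ.im) ^ 2) - m * τ.re⌋) := by
  rw [latticeDisc, Finset.card_biUnion]
  · simp only [Finset.card_map]
  · intro m _ m' _ hmm'
    simp only [Function.onFun, Finset.disjoint_left, Finset.mem_map,
      Function.Embedding.sectR_apply]
    rintro _ ⟨n, _, rfl⟩ ⟨n', _, h⟩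
    exact hmm' (Prod.ext_iff.1 h).1.symm

section

variable {τ : ℂ}

theorem mem_latticeDisc (hτ : 0 < τ.im) {x : ℝ} (hx : 0 ≤ x) {p : ℤ × ℤ} :
    p ∈ latticeDisc τ x ↔ latticeNormSq τ p ≤ x := by
  obtain ⟨m, n⟩ := p
  have hrow : |(m : ℝ)| ≤ √x / τ.im ↔ (m * τ.im) ^ 2 ≤ x := by
    rw [le_div_iff₀ hτ, ← abs_of_pos hτ, ← abs_mul, abs_of_pos hτ, abs_le_sqrt_iff hx]
  simp only [latticeDisc, Finset.mem_biUnion, Finset.mem_map, Function.Embedding.sectR_apply,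
    Prod.mk.injEq, latticeNormSq_eq, sq_add_sq_le_iff, ← hrow, ← mem_Icc_ceil_floor_iff,
    ← mem_Icc_neg_natFloor_iff (div_nonneg (sqrt_nonneg x) hτ.le)]
  constructor
  · rintro ⟨m, hm, n, hn, rfl, rfl⟩
    exact ⟨hm, hn⟩
  · rintro ⟨hm, hn⟩
    exact ⟨m, hm, n, hn, rfl, rfl⟩

theorem filter_latticeDisc (hτ : 0 < τ.im) {t x : ℝ} (ht : 0 ≤ t) (htx : t ≤ x) :
    {p ∈ latticeDisc τ x | latticeNormSq τ p ≤ t} = latticeDisc τ t := by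
  ext p
  rw [Finset.mem_filter, mem_latticeDisc hτ (ht.trans htx), mem_latticeDisc hτ ht]
  exact ⟨And.right, fun h => ⟨h.trans htx, h⟩⟩

theorem monotoneOn_card_latticeDisc (hτ : 0 < τ.im) :
    MonotoneOn (fun t => (#(latticeDisc τ t) : ℝ)) (Ici 0) := by
  intro s hs t _ hst
  dsimp only
  rw [← filter_latticeDisc hτ hs hst]
  exact_mod_cast Finset.card_filter_le _ _

theorem abs_card_latticeDisc_sub_le (hτ : 0 < τ.im) {x : ℝ} (hx : 1 ≤ x) :
    |(#(latticeDisc τ x) : ℝ) - π / τ.im * x| ≤ (7 + 2 / τ.im) * √x := by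
  set b := τ.im
  set R := √x / b
  set g : ℝ → ℝ := fun t => √(x - (t * b) ^ 2)
  have hR : 0 ≤ R := div_nonneg (sqrt_nonneg x) hτ.le
  have hsqrt : 1 ≤ √x := one_le_sqrt.2 hx
  have hrows :
      |(#(latticeDisc τ x) : ℝ) - ∑ m ∈ Finset.Icc (-⌊R⌋₊ : ℤ) ⌊R⌋₊, 2 * g m| ≤ 2 * R + 1 := by
    rw [card_latticeDisc, Nat.cast_sum, ← Finset.sum_sub_distrib]
    refine (Finset.abs_sum_le_sum_abs _ _).trans ?_
    calc _ ≤ ∑ m ∈ Finset.Icc (-⌊R⌋₊ : ℤ) ⌊R⌋₊, (1 : ℝ) := by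
          refine Finset.sum_le_sum fun m _ => ?_
          have := abs_card_Icc_ceil_floor_sub_le (l := -g m - m * τ.re) (u := g m - m * τ.re)
            (by linarith [sqrt_nonneg (x - (m * b) ^ 2)])
          rwa [show g m - m * τ.re - (-g m - m * τ.re) = 2 * g m by ring] at this
      _ ≤ 2 * R + 1 := by
          rw [Finset.sum_const, Int.card_Icc, nsmul_one,
            show (⌊R⌋₊ + 1 - -⌊R⌋₊ : ℤ).toNat = 2 * ⌊R⌋₊ + 1 by omega]
          push_cast
          linarith [Nat.floor_le hR]
  have hanti : AntitoneOn g (Icc 0 R) := fun s hs t _ hst =>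
    sqrt_le_sqrt <| sub_le_sub_left
      (pow_le_pow_left₀ (mul_nonneg hs.1 hτ.le) (mul_le_mul_of_nonneg_right hst hτ.le) 2) x
  have hsum : |∑ m ∈ Finset.Icc (-⌊R⌋₊ : ℤ) ⌊R⌋₊, g m - π * x / (2 * b)| ≤ 3 * √x := by
    rw [← integral_sqrt_sub_mul_sq hτ (by linarith)]
    simpa [g] using
      abs_sum_Icc_sub_integral_le hR (fun t => by simp [g]) hanti fun t _ => sqrt_nonneg _
  rw [← Finset.mul_sum] at hrows
  have hC : (7 + 2 / b) * √x = 7 * √x + 2 * R := by ring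
  have hmain : π / b * x = 2 * (π * x / (2 * b)) := by field_simp
  rw [abs_le] at hrows hsum ⊢
  rw [hC, hmain]
  constructor <;> linarith

theorem sum_latticeDisc_eq (hτ : 0 < τ.im) {x : ℝ} (hx : 1 ≤ x) :
    ∑ p ∈ latticeDisc τ x, 1 / latticeNormSq τ p =
      ∑ p ∈ latticeDisc τ 1, 1 / latticeNormSq τ p - #(latticeDisc τ 1) +
        #(latticeDisc τ x) / x + ∫ t in (1 : ℝ)..x, (#(latticeDisc τ t) : ℝ) / t ^ 2 := by
  have habel := sum_filter_one_div_eq (latticeDisc τ x) (latticeNormSq τ) one_pos hx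
  have hint : EqOn (fun t => (#{p ∈ latticeDisc τ x | latticeNormSq τ p ≤ t} : ℝ) / t ^ 2)
      (fun t => (#(latticeDisc τ t) : ℝ) / t ^ 2) (uIcc 1 x) := by
    intro t ht
    rw [uIcc_of_le hx] at ht
    simp only [filter_latticeDisc hτ (zero_le_one.trans ht.1) ht.2]
  rw [filter_latticeDisc hτ (zero_le_one.trans hx) le_rfl, filter_latticeDisc hτ zero_le_one hx,
    div_one, intervalIntegral.integral_congr hint] at habel
  have hfilter : {p ∈ latticeDisc τ x | ¬latticeNormSq τ p ≤ 1} =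
      {p ∈ latticeDisc τ x | latticeNormSq τ p ∈ Ioc 1 x} := by
    refine Finset.filter_congr fun p hp => ?_
    rw [mem_latticeDisc hτ (zero_le_one.trans hx)] at hp
    simp [hp]
  rw [← Finset.sum_filter_add_sum_filter_not _ (fun p => latticeNormSq τ p ≤ 1),
    filter_latticeDisc hτ zero_le_one hx, hfilter, habel]
  ring

theorem tsum_ite_eq_sum_latticeDisc (hτ : 0 < τ.im) {x : ℝ} (hx : 0 ≤ x) :
    (∑' p : ℤ × ℤ,
      if p ≠ 0 ∧ ‖(p.1 : ℂ) * τ + (p.2 : ℂ)‖ ^ 2 ≤ x then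
        1 / ‖(p.1 : ℂ) * τ + (p.2 : ℂ)‖ ^ 2
      else 0) = ∑ p ∈ latticeDisc τ x, 1 / latticeNormSq τ p := by
  rw [tsum_eq_sum (s := latticeDisc τ x)]
  · refine Finset.sum_congr rfl fun p hp => ?_
    rw [mem_latticeDisc hτ hx] at hp
    rcases eq_or_ne p 0 with rfl | hp0
    -- the origin contributes `1 / 0 = 0` on the right
    · simp [latticeNormSq]
    · exact if_pos ⟨hp0, hp⟩
  · intro p hp
    rw [mem_latticeDisc hτ hx] at hp
    exact if_neg fun h => hp h.2

end

/-- for the lattice `Λ = ℤ ⊕ ℤτ` (`Im τ > 0`) there are a constant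
`η_Λ ∈ ℝ` and `C > 0` with
`|∑_{0 ≠ μ ∈ Λ, |μ|² ≤ x} 1/|μ|² - (π/Im τ)(log x + η_Λ)| ≤ C x^{-1/2}` for all
`x ≥ 1`. -/
theorem lattice_log_asymptotic (τ : ℂ) (hτ : 0 < τ.im) :
    ∃ η : ℝ, ∃ C > (0 : ℝ), ∀ x : ℝ, 1 ≤ x →
      |(∑' mn : ℤ × ℤ,
          if mn ≠ 0 ∧ ‖(mn.1 : ℂ) * τ + (mn.2 : ℂ)‖ ^ 2 ≤ x then
            1 / ‖(mn.1 : ℂ) * τ + (mn.2 : ℂ)‖ ^ 2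
          else 0)
        - Real.pi / τ.im * (Real.log x + η)| ≤ C * x ^ (-(1 : ℝ) / 2) := by
  have hmeas : AEMeasurable (fun t => (#(latticeDisc τ t) : ℝ)) (volume.restrict (Ioi 1)) :=
    aemeasurable_restrict_of_monotoneOn measurableSet_Ioi
      ((monotoneOn_card_latticeDisc hτ).mono fun t (ht : 1 < t) => (zero_lt_one.trans ht).le)
  obtain ⟨c, hc⟩ := exists_abs_div_add_integral_sub_log_le hmeas
    fun t ht => abs_card_latticeDisc_sub_le hτ ht
  set S₁ := ∑ p ∈ latticeDisc τ 1, 1 / latticeNormSq τ p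
  refine ⟨τ.im / π * (c + S₁ - #(latticeDisc τ 1)), 3 * (7 + 2 / τ.im), by positivity,
    fun x hx => ?_⟩
  rw [tsum_ite_eq_sum_latticeDisc hτ (zero_le_one.trans hx), sum_latticeDisc_eq hτ hx]
  convert hc x hx using 2
  field_simp
  ring
end

section
/- Let G be a group, V a finite-dimensional complex inner product space of dimension n, and χ : G → U(V) a unitary representation. Let E, R, S ∈ G be such that RS = SR, E has finite order m (E^m = 1), and E⁻¹R⁻¹ER and E⁻¹S⁻¹ES lie in the subgroup of G generated by R and S. Then there exist an orthonormal basis v₁, …, v_n of V and indices 0 ≤ k ≤ l ≤ n such that: (1) for 1 ≤ i ≤ k, χ(E)v_i = χ(R)v_i = χ(S)v_i = v_i; (2) for k+1 ≤ i ≤ l, χ(R)v_i = χ(S)v_i = v_i and χ(E)v_i = λ_i v_i for some λ_i ∈ ℂ with λ_i ≠ 1 and λ_i^m = 1; (3) for l+1 ≤ i ≤ n, χ(R)v_i = λ_{R,i} v_i and χ(S)v_i = λ_{S,i} v_i for some unimodular complex numbers λ_{R,i}, λ_{S,i} that are not both equal to 1. -/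
/-!
The vectors fixed by `χ R` and `χ S` form a subspace `W` that `χ E` preserves: the commutator
hypotheses put `E⁻¹ R E` and `E⁻¹ S E` in the group generated by `R` and `S`, which fixes `W`
pointwise. Inside `W`, the vectors also fixed by `χ E` give the first block, and the unitary `χ E`
diagonalises on their orthogonal complement in `W`, with eigenvalues `m`-th roots of unity other
than `1`. The commuting unitaries `χ R` and `χ S` preserve `Wᗮ` and diagonalise simultaneously
there (induction on the dimension, splitting off a joint eigenvector); a joint eigenvalue pair
`(1, 1)` would put the eigenvector in `W`.
-/

open Module Set

section Orthonormal

variable {𝕜 E : Type*} [RCLike 𝕜] [NormedAddCommGroup E] [InnerProductSpace 𝕜 E]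

theorem Orthonormal.fin_append {p q : ℕ} {v : Fin p → E} {w : Fin q → E}
    (hv : Orthonormal 𝕜 v) (hw : Orthonormal 𝕜 w) (hvw : ∀ i j, inner 𝕜 (v i) (w j) = 0) :
    Orthonormal 𝕜 (Fin.append v w) := by
  classical
  rw [orthonormal_iff_ite] at hv hw ⊢
  intro i j
  induction i using Fin.addCases with
  | left i =>
    induction j using Fin.addCases with
    | left j => simpa [Fin.ext_iff] using hv i j
    | right j => simp [hvw, Fin.ext_iff]; omega
  | right i =>
    induction j using Fin.addCases with
    | left j => simp [inner_eq_zero_symm.1 (hvw j i), Fin.ext_iff]; omega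
    | right j => simpa [Fin.ext_iff] using hw i j

def Submodule.HasOrthonormalBasisOf (K : Submodule 𝕜 E) (P : E → Prop) : Prop :=
  ∃ u : Fin (finrank 𝕜 K) → E, Orthonormal 𝕜 u ∧ ∀ i, u i ∈ K ∧ P (u i)

namespace Submodule.HasOrthonormalBasisOf

variable {K : Submodule 𝕜 E} {P Q : E → Prop}

theorem mono (hP : K.HasOrthonormalBasisOf P) (h : ∀ x ∈ K, ‖x‖ = 1 → P x → Q x) :
    K.HasOrthonormalBasisOf Q := by
  obtain ⟨u, hu, huP⟩ := hP
  exact ⟨u, hu, fun i => ⟨(huP i).1, h _ (huP i).1 (hu.1 i) (huP i).2⟩⟩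

theorem of_forall [FiniteDimensional 𝕜 K] (h : ∀ x ∈ K, P x) : K.HasOrthonormalBasisOf P :=
  ⟨fun i => stdOrthonormalBasis 𝕜 K i,
    (stdOrthonormalBasis 𝕜 K).orthonormal.comp_linearIsometry K.subtypeₗᵢ,
    fun i => ⟨(stdOrthonormalBasis 𝕜 K i).2, h _ (stdOrthonormalBasis 𝕜 K i).2⟩⟩

end Submodule.HasOrthonormalBasisOf

theorem Submodule.exists_orthonormalBasis_of_le [FiniteDimensional 𝕜 E] {n : ℕ}
    (hn : finrank 𝕜 E = n) {K₁ K₂ : Submodule 𝕜 E} (hK : K₁ ≤ K₂) {P₁ P₂ P₃ : E → Prop}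
    (h₁ : K₁.HasOrthonormalBasisOf P₁) (h₂ : (K₁ᗮ ⊓ K₂).HasOrthonormalBasisOf P₂)
    (h₃ : K₂ᗮ.HasOrthonormalBasisOf P₃) :
    ∃ b : OrthonormalBasis (Fin n) 𝕜 E,
      (∀ i : Fin n, (i : ℕ) < finrank 𝕜 K₁ → P₁ (b i)) ∧
      (∀ i : Fin n, finrank 𝕜 K₁ ≤ i → (i : ℕ) < finrank 𝕜 K₂ → P₂ (b i)) ∧
      (∀ i : Fin n, finrank 𝕜 K₂ ≤ i → P₃ (b i)) := by
  obtain ⟨u₁, hu₁, hu₁P⟩ := h₁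
  obtain ⟨u₂, hu₂, hu₂P⟩ := h₂
  obtain ⟨u₃, hu₃, hu₃P⟩ := h₃
  have hdim₂ := finrank_add_inf_finrank_orthogonal hK
  obtain rfl : n = finrank 𝕜 K₁ + finrank 𝕜 ↥(K₁ᗮ ⊓ K₂) + finrank 𝕜 K₂ᗮ := by
    rw [← hn, ← K₂.finrank_add_finrank_orthogonal, hdim₂]
  rw [← hdim₂]
  have hu₁₂ : Orthonormal 𝕜 (Fin.append u₁ u₂) :=
    hu₁.fin_append hu₂ fun i j => inner_right_of_mem_orthogonal (hu₁P i).1 (hu₂P j).1.1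
  have hu₁₂K₂ : ∀ i, Fin.append u₁ u₂ i ∈ K₂ := by
    simp only [Fin.forall_fin_add, Fin.append_left, Fin.append_right]
    exact ⟨fun i => hK (hu₁P i).1, fun j => (hu₂P j).1.2⟩
  have hu : Orthonormal 𝕜 (Fin.append (Fin.append u₁ u₂) u₃) :=
    hu₁₂.fin_append hu₃ fun i j => inner_right_of_mem_orthogonal (hu₁₂K₂ i) (hu₃P j).1
  refine ⟨OrthonormalBasis.mk hu
    (hu.linearIndependent.span_eq_top_of_card_eq_finrank' (by simp [hn])).ge, ?_, ?_, ?_⟩ <;>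
  simp only [Fin.forall_fin_add, OrthonormalBasis.coe_mk, Fin.append_left, Fin.append_right,
    Fin.val_castAdd, Fin.val_natAdd]
  · exact ⟨⟨fun i _ => (hu₁P i).2, fun j h => absurd h (by omega)⟩,
      fun j h => absurd h (by omega)⟩
  · exact ⟨⟨fun i h => absurd h (by omega), fun j _ _ => (hu₂P j).2⟩,
      fun j _ h => absurd h (by omega)⟩
  · exact ⟨⟨fun i h => absurd h (by omega), fun j h => absurd h (by omega)⟩,
      fun j _ => (hu₃P j).2⟩

end Orthonormal

theorem LinearIsometry.norm_eq_one_of_apply_eq_smul {𝕜 E : Type*} [NormedField 𝕜]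
    [SeminormedAddCommGroup E] [NormedSpace 𝕜 E] (A : E →ₗᵢ[𝕜] E) {v : E} (hv : ‖v‖ ≠ 0) {a : 𝕜}
    (h : A v = a • v) : ‖a‖ = 1 := by
  have := A.norm_map v
  rw [h, norm_smul] at this
  exact (mul_eq_right₀ hv).1 this

theorem LinearIsometryEquiv.pow_apply_of_apply_eq_smul {R E : Type*} [Semiring R]
    [SeminormedAddCommGroup E] [Module R E] (A : E ≃ₗᵢ[R] E) {v : E} {a : R}
    (h : A v = a • v) (m : ℕ) : (A ^ m) v = a ^ m • v := by
  induction m with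
  | zero => simp
  | succ m ih => rw [pow_succ', coe_mul, Function.comp_apply, ih, map_smul, h, smul_smul, pow_succ]

theorem LinearIsometryEquiv.mapsTo_orthogonal {𝕜 E : Type*} [RCLike 𝕜] [NormedAddCommGroup E]
    [InnerProductSpace 𝕜 E] (A : E ≃ₗᵢ[𝕜] E) {K : Submodule 𝕜 E} [FiniteDimensional 𝕜 K]
    (hK : MapsTo A K K) : MapsTo A Kᗮ Kᗮ := by
  have hAK : K.map (A.toLinearEquiv : E →ₗ[𝕜] E) = K :=
    Submodule.eq_of_le_of_finrank_eq (Submodule.map_le_iff_le_comap.2 hK)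
      (LinearEquiv.finrank_map_eq _ _)
  intro x hx
  have : A x ∈ Kᗮ.map (A.toLinearEquiv : E →ₗ[𝕜] E) := Submodule.mem_map_of_mem hx
  rwa [Submodule.map_orthogonal_equiv, hAK] at this

theorem Module.End.exists_common_eigenvector {K M : Type*} [Field K] [IsAlgClosed K]
    [AddCommGroup M] [Module K M] [FiniteDimensional K M] [Nontrivial M] {f g : End K M}
    (h : Commute f g) : ∃ v : M, v ≠ 0 ∧ ∃ a b : K, f v = a • v ∧ g v = b • v := by
  obtain ⟨a, ha⟩ := exists_eigenvalue f
  have hg : MapsTo g (f.eigenspace a) (f.eigenspace a) := mapsTo_genEigenspace_of_comm h a 1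
  have : Nontrivial (f.eigenspace a) := Submodule.nontrivial_iff_ne_bot.2 ha
  obtain ⟨b, hb⟩ := exists_eigenvalue (g.restrict hg)
  obtain ⟨w, hw, hw0⟩ := hb.exists_hasEigenvector
  refine ⟨w, by simpa using hw0, a, b, mem_eigenspace_iff.1 w.2, ?_⟩
  exact congrArg Subtype.val (mem_eigenspace_iff.1 hw)

theorem mapsTo_span_singleton_of_apply_eq_smul {R M : Type*} [CommSemiring R] [AddCommMonoid M]
    [Module R M] {f : M →ₗ[R] M} {u : M} {c : R} (h : f u = c • u) : MapsTo f (R ∙ u) (R ∙ u) := by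
  intro x hx
  obtain ⟨r, rfl⟩ := Submodule.mem_span_singleton.1 hx
  rw [map_smul, h, smul_comm]
  exact Submodule.smul_mem _ c (Submodule.smul_mem _ r (Submodule.mem_span_singleton_self u))

section JointEigenvectors

variable {V : Type*} [NormedAddCommGroup V] [InnerProductSpace ℂ V] [FiniteDimensional ℂ V]
  {A B : V ≃ₗᵢ[ℂ] V}

theorem Submodule.exists_unit_jointEigenvector_mem (hAB : Commute A B) {K : Submodule ℂ V}
    (hK : K ≠ ⊥) (hA : MapsTo A K K) (hB : MapsTo B K K) :
    ∃ u ∈ K, ‖u‖ = 1 ∧ ∃ a b : ℂ, A u = a • u ∧ B u = b • u := by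
  have hAB' : Commute (A : V →ₗ[ℂ] V) (B : V →ₗ[ℂ] V) :=
    LinearMap.ext fun x => DFunLike.congr_fun hAB.eq x
  have : Nontrivial K := Submodule.nontrivial_iff_ne_bot.2 hK
  obtain ⟨v, hv0, a, b, hAv, hBv⟩ :=
    Module.End.exists_common_eigenvector (LinearMap.restrict_commute hAB' hA hB)
  have hv0' : (v : V) ≠ 0 := by simpa using hv0
  refine ⟨((‖(v : V)‖⁻¹ : ℝ) : ℂ) • (v : V), K.smul_mem _ v.2, by simp [norm_smul, hv0'],
    a, b, ?_, ?_⟩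
  · rw [map_smul, show A v = a • (v : V) from congrArg Subtype.val hAv, smul_comm]
  · rw [map_smul, show B v = b • (v : V) from congrArg Subtype.val hBv, smul_comm]

theorem Submodule.hasOrthonormalBasisOf_jointEigenvectors (hAB : Commute A B)
    (K : Submodule ℂ V) (hA : MapsTo A K K) (hB : MapsTo B K K) :
    K.HasOrthonormalBasisOf fun x => ∃ a b : ℂ, A x = a • x ∧ B x = b • x := by
  induction hd : finrank ℂ K using Nat.strong_induction_on generalizing K with
  | _ d ih =>
  rcases eq_or_ne K ⊥ with rfl | hK
  · exact HasOrthonormalBasisOf.of_forall fun x hx => by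
      rw [(Submodule.mem_bot ℂ).1 hx]; exact ⟨0, 0, by simp, by simp⟩
  obtain ⟨u, huK, hu1, a, b, hAu, hBu⟩ := exists_unit_jointEigenvector_mem hAB hK hA hB
  have hdim : finrank ℂ K = 1 + finrank ℂ ↥((ℂ ∙ u)ᗮ ⊓ K) := by
    rw [← finrank_add_inf_finrank_orthogonal ((Submodule.span_singleton_le_iff_mem u K).2 huK),
      finrank_span_singleton (norm_ne_zero_iff.1 (hu1.symm ▸ one_ne_zero))]
  obtain ⟨w, hw, hwP⟩ := ih _ (by omega) ((ℂ ∙ u)ᗮ ⊓ K)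
    ((A.mapsTo_orthogonal (mapsTo_span_singleton_of_apply_eq_smul hAu)).inter_inter hA)
    ((B.mapsTo_orthogonal (mapsTo_span_singleton_of_apply_eq_smul hBu)).inter_inter hB) rfl
  have hu : Orthonormal ℂ ![u] :=
    ⟨fun _ => by simpa using hu1, fun i j hij => (hij (Subsingleton.elim i j)).elim⟩
  rw [HasOrthonormalBasisOf, hdim]
  refine ⟨Fin.append ![u] w, hu.fin_append hw fun i j => ?_,
    Fin.addCases (fun i => ?_) fun j => ?_⟩
  · rw [Matrix.cons_val_fin_one]
    exact Submodule.inner_right_of_mem_orthogonal (Submodule.mem_span_singleton_self u) (hwP j).1.1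
  · rw [Fin.append_left, Matrix.cons_val_fin_one]
    exact ⟨huK, a, b, hAu, hBu⟩
  · rw [Fin.append_right]
    exact ⟨(hwP j).1.2, (hwP j).2⟩

end JointEigenvectors

section FixedSubspace

variable {G R V : Type*} [Group G] [Semiring R] [SeminormedAddCommGroup V] [Module R V]

def fixedSubspace (χ : G →* (V ≃ₗᵢ[R] V)) (s : Set G) : Submodule R V where
  carrier := {v | ∀ g ∈ s, χ g v = v}
  add_mem' hv hw g hg := by simp [hv g hg, hw g hg]
  zero_mem' _ _ := map_zero _
  smul_mem' c v hv g hg := by simp [hv g hg]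

variable {χ : G →* (V ≃ₗᵢ[R] V)} {s : Set G} {v : V}

@[simp]
theorem mem_fixedSubspace : v ∈ fixedSubspace χ s ↔ ∀ g ∈ s, χ g v = v := Iff.rfl

theorem apply_eq_of_mem_fixedSubspace (hv : v ∈ fixedSubspace χ s) {g : G}
    (hg : g ∈ Subgroup.closure s) : χ g v = v := by
  induction hg using Subgroup.closure_induction with
  | mem g hg => exact hv g hg
  | one => simp
  | mul g h _ _ hg hh => simp [hg, hh]
  | inv g _ hg => simpa using ((χ g).symm_apply_eq.2 hg.symm)

theorem mapsTo_fixedSubspace {E : G} (h : ∀ g ∈ s, E⁻¹ * g * E ∈ Subgroup.closure s) :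
    MapsTo (χ E) (fixedSubspace χ s) (fixedSubspace χ s) := by
  intro v hv g hg
  calc χ g (χ E v) = χ E (χ (E⁻¹ * g * E) v) := by simp
    _ = χ E v := by rw [apply_eq_of_mem_fixedSubspace hv (h g hg)]

end FixedSubspace

theorem Subgroup.conj_mem_of_commutator_mem {G : Type*} [Group G] {H : Subgroup G} {g x : G}
    (hg : g ∈ H) (h : x⁻¹ * g⁻¹ * x * g ∈ H) : x⁻¹ * g * x ∈ H := by
  simpa [mul_assoc] using H.inv_mem (H.mul_mem h (H.inv_mem hg))

section UnitaryRepresentation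

variable {G V : Type*} [Group G] [NormedAddCommGroup V] [InnerProductSpace ℂ V]
  [FiniteDimensional ℂ V] (χ : G →* (V ≃ₗᵢ[ℂ] V))

theorem hasOrthonormalBasisOf_eigenvectors_of_pow_eq_one {E : G} {m : ℕ} (hEm : E ^ m = 1)
    {K : Submodule ℂ V} (hK : MapsTo (χ E) K K) :
    ((fixedSubspace χ {E} ⊓ K)ᗮ ⊓ K).HasOrthonormalBasisOf fun x =>
      ∃ lam : ℂ, lam ≠ 1 ∧ lam ^ m = 1 ∧ χ E x = lam • x := by
  set F := fixedSubspace χ {E} ⊓ K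
  have hF : MapsTo (χ E) F F := fun x hx => by
    rwa [(Submodule.mem_inf.1 hx).1 E rfl]
  have hForth := ((χ E).mapsTo_orthogonal hF).inter_inter hK
  refine (Submodule.hasOrthonormalBasisOf_jointEigenvectors (Commute.refl (χ E)) _
    hForth hForth).mono ?_
  rintro x ⟨hxF, hxK⟩ hx1 ⟨lam, -, hlam, -⟩
  have hx0 : x ≠ 0 := norm_ne_zero_iff.1 (hx1 ▸ one_ne_zero)
  refine ⟨lam, ?_, ?_, hlam⟩
  · rintro rfl
    have hx : x ∈ F := ⟨by simpa using hlam, hxK⟩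
    exact hx0 (Submodule.disjoint_def.1 F.orthogonal_disjoint x hx hxF)
  · have := (χ E).pow_apply_of_apply_eq_smul hlam m
    rw [← map_pow, hEm, map_one, LinearIsometryEquiv.coe_one, id] at this
    exact smul_left_injective ℂ hx0 (by simpa using this.symm)

theorem hasOrthonormalBasisOf_orthogonal_fixedSubspace_pair {R S : G} (h : Commute R S) :
    (fixedSubspace χ {R, S})ᗮ.HasOrthonormalBasisOf fun x =>
      ∃ lamR lamS : ℂ, ‖lamR‖ = 1 ∧ ‖lamS‖ = 1 ∧ ¬(lamR = 1 ∧ lamS = 1) ∧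
        χ R x = lamR • x ∧ χ S x = lamS • x := by
  set W := fixedSubspace χ {R, S}
  have hW : ∀ g ∈ ({R, S} : Set G), MapsTo (χ g) W W := fun g hg x hx => by rwa [hx g hg]
  refine (Submodule.hasOrthonormalBasisOf_jointEigenvectors (h.map χ) Wᗮ
    ((χ R).mapsTo_orthogonal (hW R (by simp))) ((χ S).mapsTo_orthogonal (hW S (by simp)))).mono ?_
  rintro x hxW hx1 ⟨a, b, ha, hb⟩
  have hx0 : ‖x‖ ≠ 0 := hx1 ▸ one_ne_zero
  refine ⟨a, b, (χ R).toLinearIsometry.norm_eq_one_of_apply_eq_smul hx0 ha,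
    (χ S).toLinearIsometry.norm_eq_one_of_apply_eq_smul hx0 hb, ?_, ha, hb⟩
  rintro ⟨rfl, rfl⟩
  have hx : x ∈ W := mem_fixedSubspace.2 (by simp [ha, hb])
  exact hx0 (norm_eq_zero.2 (Submodule.disjoint_def.1 W.orthogonal_disjoint x hx hxW))

end UnitaryRepresentation

theorem adapted_orthonormal_basis_general {G : Type*} [Group G] {V : Type*}
    [NormedAddCommGroup V] [InnerProductSpace ℂ V] [FiniteDimensional ℂ V]
    (n : ℕ) (hn : Module.finrank ℂ V = n)
    (χ : G →* (V ≃ₗᵢ[ℂ] V)) (E R S : G)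
    (hcomm : R * S = S * R)
    (m : ℕ) (hEm : E ^ m = 1)
    (hER : E⁻¹ * R⁻¹ * E * R ∈ Subgroup.closure ({R, S} : Set G))
    (hES : E⁻¹ * S⁻¹ * E * S ∈ Subgroup.closure ({R, S} : Set G)) :
    ∃ (b : OrthonormalBasis (Fin n) ℂ V) (k l : ℕ), k ≤ l ∧ l ≤ n ∧
      (∀ i : Fin n, (i : ℕ) < k →
        χ E (b i) = b i ∧ χ R (b i) = b i ∧ χ S (b i) = b i) ∧
      (∀ i : Fin n, k ≤ (i : ℕ) → (i : ℕ) < l →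
        χ R (b i) = b i ∧ χ S (b i) = b i ∧
          ∃ lam : ℂ, lam ≠ 1 ∧ lam ^ m = 1 ∧ χ E (b i) = lam • b i) ∧
      (∀ i : Fin n, l ≤ (i : ℕ) →
        ∃ lamR lamS : ℂ, ‖lamR‖ = 1 ∧ ‖lamS‖ = 1 ∧
          ¬(lamR = 1 ∧ lamS = 1) ∧
          χ R (b i) = lamR • b i ∧ χ S (b i) = lamS • b i) := by
  set W := fixedSubspace χ {R, S}
  have hEW : MapsTo (χ E) W W := mapsTo_fixedSubspace fun g hg => by
    rcases hg with rfl | rfl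
    exacts [Subgroup.conj_mem_of_commutator_mem (Subgroup.subset_closure (by simp)) hER,
      Subgroup.conj_mem_of_commutator_mem (Subgroup.subset_closure (by simp)) hES]
  have hfixed : (fixedSubspace χ {E} ⊓ W).HasOrthonormalBasisOf fun x =>
      χ E x = x ∧ χ R x = x ∧ χ S x = x :=
    .of_forall fun x hx => by simpa [W] using hx
  have heigen : ((fixedSubspace χ {E} ⊓ W)ᗮ ⊓ W).HasOrthonormalBasisOf fun x =>
      χ R x = x ∧ χ S x = x ∧ ∃ lam : ℂ, lam ≠ 1 ∧ lam ^ m = 1 ∧ χ E x = lam • x :=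
    (hasOrthonormalBasisOf_eigenvectors_of_pow_eq_one χ hEm hEW).mono
      fun x hx _ hxE => ⟨hx.2 R (by simp), hx.2 S (by simp), hxE⟩
  obtain ⟨b, h₁, h₂, h₃⟩ := Submodule.exists_orthonormalBasis_of_le hn inf_le_right hfixed heigen
    (hasOrthonormalBasisOf_orthogonal_fixedSubspace_pair χ hcomm)
  exact ⟨b, _, _, Submodule.finrank_mono inf_le_right, hn ▸ W.finrank_le, h₁, h₂, h₃⟩

/-- with `χ : G → U(V)` a unitary representation on an
`n`-dimensional complex inner product space, `RS = SR`, `E` of finite order `m`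
(`E^m = 1`), and the commutators `E⁻¹R⁻¹ER`, `E⁻¹S⁻¹ES` in the subgroup
generated by `R` and `S`, there is an orthonormal basis `v₁, …, v_n` of `V` and
indices `0 ≤ k ≤ l ≤ n` splitting it into a singular part (fixed by `χ(E)`,
`χ(R)`, `χ(S)`), an almost-singular part (fixed by `χ(R)`, `χ(S)`, eigenvector
of `χ(E)` with eigenvalue an `m`-th root of unity `≠ 1`), and a regular part
(joint eigenvectors of `χ(R)`, `χ(S)` with unimodular eigenvalues not both 1). -/
theorem adapted_orthonormal_basis {G : Type*} [Group G] {V : Type*}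
    [NormedAddCommGroup V] [InnerProductSpace ℂ V] [FiniteDimensional ℂ V]
    (n : ℕ) (hn : Module.finrank ℂ V = n)
    (χ : G →* (V ≃ₗᵢ[ℂ] V)) (E R S : G)
    (hcomm : R * S = S * R)
    (m : ℕ) (hm : 0 < m) (hEm : E ^ m = 1)
    (hER : E⁻¹ * R⁻¹ * E * R ∈ Subgroup.closure ({R, S} : Set G))
    (hES : E⁻¹ * S⁻¹ * E * S ∈ Subgroup.closure ({R, S} : Set G)) :
    ∃ (b : OrthonormalBasis (Fin n) ℂ V) (k l : ℕ), k ≤ l ∧ l ≤ n ∧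
      (∀ i : Fin n, (i : ℕ) < k →
        χ E (b i) = b i ∧ χ R (b i) = b i ∧ χ S (b i) = b i) ∧
      (∀ i : Fin n, k ≤ (i : ℕ) → (i : ℕ) < l →
        χ R (b i) = b i ∧ χ S (b i) = b i ∧
          ∃ lam : ℂ, lam ≠ 1 ∧ lam ^ m = 1 ∧ χ E (b i) = lam • b i) ∧
      (∀ i : Fin n, l ≤ (i : ℕ) →
        ∃ lamR lamS : ℂ, ‖lamR‖ = 1 ∧ ‖lamS‖ = 1 ∧
          ¬(lamR = 1 ∧ lamS = 1) ∧
          χ R (b i) = lamR • b i ∧ χ S (b i) = lamS • b i) :=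
  adapted_orthonormal_basis_general n hn χ E R S hcomm m hEm hER hES
end

section
/- For every s ∈ ℂ with Re(s) > 0 and every t ∈ (0, π), one has ∫₀^∞ e^{−sx} · sinh(x) / (cosh(x) − cos(t)) dx = (1 / sin t) · Σ_{k=1}^{∞} sin(kt) · ( 1/(s − 1 + k) − 1/(s + 1 + k) ); in particular the integral converges and the series on the right converges. -/
open MeasureTheory Set Real

/-!
With `r = e^{-x}` one has `sin t · sinh x / (cosh x - cos t) = (1 - r²) sin t / (1 - 2r cos t + r²)
= ∑_{k ≥ 0} sin((k+1)t) (r^k - r^{k+2})`, the imaginary part of a geometric series in `r e^{it}`.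
Multiplying by `e^{-sx}` and integrating term by term gives the series, because
`∫₀^∞ e^{-sx} (e^{-kx} - e^{-(k+2)x}) dx = 1/(s+k) - 1/(s+k+2)`. The interchange is dominated
convergence: the `k`-th term is bounded by `e^{-σx} (e^{-kx} - e^{-(k+2)x})` with `σ = Re s`, and
these bounds telescope to the integrable `e^{-σx} (1 + e^{-x})`.
-/

theorem hasSum_sin_succ_mul_pow (t : ℝ) {r : ℝ} (hr : |r| < 1) :
    HasSum (fun k : ℕ => sin ((k + 1) * t) * r ^ k) (sin t / (1 - 2 * r * cos t + r ^ 2)) := by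
  -- the imaginary part of `∑ z (r z)^k = z / (1 - r z)` for `z = e^{it}`
  set z : ℂ := Complex.exp (t * Complex.I) with hz_def
  have hz : ‖(r : ℂ) * z‖ < 1 := by simpa [z, Complex.norm_exp_ofReal_mul_I] using hr
  convert Complex.hasSum_im ((hasSum_geometric_of_norm_lt_one hz).mul_left z) using 1
  · funext k
    have : z * ((r : ℂ) * z) ^ k =
        ((r ^ k : ℝ) : ℂ) * Complex.exp (((k + 1) * t : ℝ) * Complex.I) := by
      rw [mul_pow, mul_left_comm, ← pow_succ', ← Complex.exp_nat_mul]
      push_cast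
      ring_nf
    rw [this, Complex.im_ofReal_mul, Complex.exp_ofReal_mul_I_im, mul_comm]
  · have hz' : z = cos t + sin t * Complex.I := by
      rw [hz_def, Complex.exp_mul_I, ← Complex.ofReal_cos, ← Complex.ofReal_sin]
    have hden : 1 - 2 * r * cos t + r ^ 2 = Complex.normSq (1 - r * z) := by
      simp only [hz', Complex.normSq_apply, Complex.sub_re, Complex.sub_im, Complex.mul_re,
        Complex.mul_im, Complex.add_re, Complex.add_im, Complex.ofReal_re, Complex.ofReal_im,
        Complex.one_re, Complex.one_im, Complex.I_re, Complex.I_im]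
      linear_combination -r ^ 2 * sin_sq_add_cos_sq t
    rw [← div_eq_mul_inv, Complex.div_im, hden]
    simp only [hz', Complex.sub_re, Complex.sub_im, Complex.mul_re, Complex.mul_im,
      Complex.add_re, Complex.add_im, Complex.ofReal_re, Complex.ofReal_im, Complex.one_re,
      Complex.one_im, Complex.I_re, Complex.I_im]
    ring

theorem hasSum_pow_sub_pow_add_two {r : ℝ} (hr : |r| < 1) :
    HasSum (fun k : ℕ => r ^ k - r ^ (k + 2)) (1 + r) := by
  have hr1 : 1 - r ≠ 0 := by linarith [le_abs_self r]
  have h := (hasSum_geometric_of_abs_lt_one hr).mul_left (1 - r ^ 2)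
  rwa [show (1 - r ^ 2) * (1 - r)⁻¹ = 1 + r by field_simp; ring,
    show (fun k : ℕ => (1 - r ^ 2) * r ^ k) = fun k => r ^ k - r ^ (k + 2) from
      funext fun k => by ring] at h

theorem exp_neg_mul_sub_exp_neg_mul_eq_pow_sub_pow (k : ℕ) (x : ℝ) :
    exp (-(k * x)) - exp (-((k + 2) * x)) = exp (-x) ^ k - exp (-x) ^ (k + 2) := by
  rw [← exp_nat_mul, ← exp_nat_mul]
  push_cast
  ring_nf

theorem abs_exp_neg_lt_one {x : ℝ} (hx : 0 < x) : |exp (-x)| < 1 := by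
  rw [abs_of_pos (exp_pos _), exp_lt_one_iff]
  linarith

theorem hasSum_sin_succ_mul_exp_sub_exp (t : ℝ) {x : ℝ} (hx : 0 < x) :
    HasSum (fun k : ℕ => sin ((k + 1) * t) * (exp (-(k * x)) - exp (-((k + 2) * x))))
      (sin t * (sinh x / (cosh x - cos t))) := by
  set r := exp (-x)
  have hterms : (fun k : ℕ => sin ((k + 1) * t) * (exp (-(k * x)) - exp (-((k + 2) * x)))) =
      fun k : ℕ => (1 - r ^ 2) * (sin ((k + 1) * t) * r ^ k) := by
    funext k
    rw [exp_neg_mul_sub_exp_neg_mul_eq_pow_sub_pow]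
    ring
  have hvalue : sin t * (sinh x / (cosh x - cos t)) =
      (1 - r ^ 2) * (sin t / (1 - 2 * r * cos t + r ^ 2)) := by
    have hr0 : 0 < r := exp_pos _
    have hcosh : 0 < cosh x - cos t := by linarith [one_lt_cosh.2 hx.ne', cos_le_one t]
    have hEr : exp x * r = 1 := by rw [← exp_add, add_neg_cancel, exp_zero]
    have hden : 1 - 2 * r * cos t + r ^ 2 = 2 * r * (cosh x - cos t) := by
      rw [cosh_eq]
      linear_combination -hEr
    rw [hden, sinh_eq]
    field_simp
    linear_combination sin t * hEr
  rw [hterms, hvalue]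
  exact (hasSum_sin_succ_mul_pow t (abs_exp_neg_lt_one hx)).mul_left _

theorem integrableOn_cexp_neg_mul_Ioi {a : ℂ} (ha : 0 < a.re) :
    IntegrableOn (fun x : ℝ => Complex.exp (-a * x)) (Ioi 0) :=
  integrableOn_exp_mul_complex_Ioi (by simpa using ha) 0

theorem integral_cexp_neg_mul_Ioi {a : ℂ} (ha : 0 < a.re) :
    ∫ x : ℝ in Ioi 0, Complex.exp (-a * x) = 1 / a := by
  rw [integral_exp_mul_complex_Ioi (by simpa using ha) 0]
  simp

theorem cexp_neg_mul_mul_exp_neg (s : ℂ) (a x : ℝ) :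
    Complex.exp (-s * x) * (exp (-(a * x)) : ℂ) = Complex.exp (-(s + a) * x) := by
  rw [Complex.ofReal_exp, ← Complex.exp_add]
  push_cast
  ring_nf

theorem integral_cexp_neg_mul_mul_exp_sub_exp {s : ℂ} {a b : ℝ} (ha : 0 < s.re + a)
    (hb : 0 < s.re + b) (c : ℝ) :
    ∫ x : ℝ in Ioi 0, Complex.exp (-s * x) * ((c * (exp (-(a * x)) - exp (-(b * x))) : ℝ) : ℂ) =
      c * (1 / (s + a) - 1 / (s + b)) := by
  have ha' : 0 < (s + a).re := by simpa using ha
  have hb' : 0 < (s + b).re := by simpa using hb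
  have hfun : (fun x : ℝ =>
      Complex.exp (-s * x) * ((c * (exp (-(a * x)) - exp (-(b * x))) : ℝ) : ℂ)) =
      fun x : ℝ => c * (Complex.exp (-(s + a) * x) - Complex.exp (-(s + b) * x)) := by
    funext x
    rw [← cexp_neg_mul_mul_exp_neg, ← cexp_neg_mul_mul_exp_neg]
    push_cast
    ring
  rw [hfun, integral_const_mul, integral_sub (integrableOn_cexp_neg_mul_Ioi ha')
    (integrableOn_cexp_neg_mul_Ioi hb'), integral_cexp_neg_mul_Ioi ha',
    integral_cexp_neg_mul_Ioi hb']

theorem norm_cexp_neg_mul_mul_sin_mul_exp_sub_exp_le (s : ℂ) (θ : ℝ) (k : ℕ) {x : ℝ}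
    (hx : 0 ≤ x) :
    ‖Complex.exp (-s * x) * ↑(sin θ * (exp (-(k * x)) - exp (-((k + 2) * x))))‖ ≤
      exp (-s.re * x) * (exp (-(k * x)) - exp (-((k + 2) * x))) := by
  have hd : 0 ≤ exp (-(k * x)) - exp (-((k + 2) * x)) := by
    rw [sub_nonneg, exp_le_exp]
    nlinarith
  have hre : (-s * x).re = -s.re * x := by simp
  rw [norm_mul, Complex.norm_exp, hre, Complex.norm_real, norm_mul, norm_eq_abs,
    norm_eq_abs, abs_of_nonneg hd]
  gcongr
  exact mul_le_of_le_one_left hd (abs_sin_le_one _)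

theorem integrableOn_exp_neg_mul_mul_one_add_exp_neg {σ : ℝ} (hσ : 0 < σ) :
    IntegrableOn (fun x => exp (-σ * x) * (1 + exp (-x))) (Ioi 0) := by
  refine ((exp_neg_integrableOn_Ioi 0 hσ).add
    (exp_neg_integrableOn_Ioi 0 (add_pos hσ one_pos))).congr_fun (fun x _ => ?_) measurableSet_Ioi
  rw [Pi.add_apply, mul_one_add, ← exp_add]
  ring_nf

theorem integrableOn_and_hasSum_integral_cexp_neg_mul_sin_mul_sinh_div {s : ℂ} (hs : 0 < s.re)
    (t : ℝ) :
    IntegrableOn (fun x : ℝ => Complex.exp (-s * x) * ↑(sin t * (sinh x / (cosh x - cos t))))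
      (Ioi 0) ∧
    HasSum (fun k : ℕ => (sin ((k + 1) * t) : ℂ) * (1 / (s + k) - 1 / (s + (k + 2))))
      (∫ x : ℝ in Ioi 0, Complex.exp (-s * x) * ↑(sin t * (sinh x / (cosh x - cos t)))) := by
  set F : ℕ → ℝ → ℂ := fun k x =>
    Complex.exp (-s * x) * ↑(sin ((k + 1) * t) * (exp (-(k * x)) - exp (-((k + 2) * x))))
  set bound : ℕ → ℝ → ℝ := fun k x => exp (-s.re * x) * (exp (-(k * x)) - exp (-((k + 2) * x)))
  have hF_lim : ∀ x ∈ Ioi (0 : ℝ), HasSum (F · x)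
      (Complex.exp (-s * x) * ↑(sin t * (sinh x / (cosh x - cos t)))) := fun x hx =>
    (Complex.hasSum_ofReal.2 (hasSum_sin_succ_mul_exp_sub_exp t hx)).mul_left _
  have hbound_sum : ∀ x ∈ Ioi (0 : ℝ), HasSum (bound · x) (exp (-s.re * x) * (1 + exp (-x))) :=
    fun x hx => by
      simp only [bound, exp_neg_mul_sub_exp_neg_mul_eq_pow_sub_pow]
      exact (hasSum_pow_sub_pow_add_two (abs_exp_neg_lt_one hx)).mul_left _
  have hF_le (k : ℕ) : ∀ x ∈ Ioi (0 : ℝ), ‖F k x‖ ≤ bound k x := fun x hx =>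
    norm_cexp_neg_mul_mul_sin_mul_exp_sub_exp_le s _ k (le_of_lt hx)
  have hbound_int : IntegrableOn (fun x => ∑' k, bound k x) (Ioi 0) :=
    (integrableOn_exp_neg_mul_mul_one_add_exp_neg hs).congr_fun
      (fun x hx => (hbound_sum x hx).tsum_eq.symm) measurableSet_Ioi
  have hF_int (k : ℕ) : ∫ x in Ioi 0, F k x =
      (sin ((k + 1) * t) : ℂ) * (1 / (s + k) - 1 / (s + (k + 2))) := by
    have hk : (0 : ℝ) ≤ k := k.cast_nonneg
    rw [integral_cexp_neg_mul_mul_exp_sub_exp (by linarith) (by linarith)]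
    push_cast
    ring
  refine ⟨Integrable.mono' hbound_int (by fun_prop) ?_, ?_⟩
  · filter_upwards [ae_restrict_mem measurableSet_Ioi] with x hx
    exact (hF_lim x hx).norm_le_of_bounded (hbound_sum x hx).summable.hasSum (hF_le · x hx)
  · simpa only [hF_int] using hasSum_integral_of_dominated_convergence bound
      (fun k => (by fun_prop : Continuous (F k)).aestronglyMeasurable)
      (fun k => (ae_restrict_mem measurableSet_Ioi).mono (hF_le k))
      ((ae_restrict_mem measurableSet_Ioi).mono fun x hx => (hbound_sum x hx).summable)
      hbound_int ((ae_restrict_mem measurableSet_Ioi).mono hF_lim)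

/-- for `Re s > 0` and `t ∈ (0, π)`,
`∫₀^∞ e^{-sx} sinh x/(cosh x - cos t) dx
  = (1/sin t) ∑_{k≥1} sin(kt)(1/(s-1+k) - 1/(s+1+k))`;
in particular the integral converges and the series converges. -/
theorem integral_eq_sine_series (s : ℂ) (hs : 0 < s.re) (t : ℝ)
    (ht : t ∈ Set.Ioo (0 : ℝ) Real.pi) :
    MeasureTheory.IntegrableOn
      (fun x : ℝ => Complex.exp (-s * (x : ℂ)) * (Real.sinh x : ℂ) /
        ((Real.cosh x - Real.cos t : ℝ) : ℂ)) (Set.Ioi 0) ∧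
    Summable (fun k : ℕ =>
      ((Real.sin (((k : ℝ) + 1) * t) : ℝ) : ℂ) *
        (1 / (s - 1 + ((k : ℂ) + 1)) - 1 / (s + 1 + ((k : ℂ) + 1)))) ∧
    ∫ x in Set.Ioi (0 : ℝ),
        Complex.exp (-s * (x : ℂ)) * (Real.sinh x : ℂ) /
          ((Real.cosh x - Real.cos t : ℝ) : ℂ)
      = (1 / ((Real.sin t : ℝ) : ℂ)) *
        ∑' k : ℕ, ((Real.sin (((k : ℝ) + 1) * t) : ℝ) : ℂ) *
          (1 / (s - 1 + ((k : ℂ) + 1)) - 1 / (s + 1 + ((k : ℂ) + 1))) := by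
  have hsin : (sin t : ℂ) ≠ 0 := Complex.ofReal_ne_zero.2 (sin_pos_of_pos_of_lt_pi ht.1 ht.2).ne'
  obtain ⟨hint, hsum⟩ := integrableOn_and_hasSum_integral_cexp_neg_mul_sin_mul_sinh_div hs t
  have hf : (fun x : ℝ => Complex.exp (-s * x) * (sinh x : ℂ) / ((cosh x - cos t : ℝ) : ℂ)) =
      fun x : ℝ => 1 / (sin t : ℂ) *
        (Complex.exp (-s * x) * ↑(sin t * (sinh x / (cosh x - cos t)))) := by
    funext x
    rw [Complex.ofReal_mul, Complex.ofReal_div]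
    field_simp
  have hterms : (fun k : ℕ => (sin ((k + 1) * t) : ℂ) *
        (1 / (s - 1 + ((k : ℂ) + 1)) - 1 / (s + 1 + ((k : ℂ) + 1)))) =
      fun k : ℕ => (sin ((k + 1) * t) : ℂ) * (1 / (s + k) - 1 / (s + (k + 2))) := by
    funext k
    ring_nf
  rw [hf, hterms, integral_const_mul, hsum.tsum_eq]
  exact ⟨hint.const_mul _, hsum.summable, rfl⟩
end

section
/- For every s ∈ ℂ with Re(s) > 0, one has ∫₀^∞ e^{−sx} · sinh(x) / (cosh(x) + 1/2) dx = (2/√3) · Σ_{k=1}^{∞} sin(2πk/3) · ( 1/(s − 1 + k) − 1/(s + 1 + k) ); in particular the integral converges and the series on the right converges. -/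
/-!
With `q = e^{-x}` one has `sinh x / (cosh x + 1/2) = (1 - q²) / (1 + q + q²)`, and
`(√3/2) / (1 + q + q²) = ∑_{k ≥ 0} sin (2π(k+1)/3) q^k` is the imaginary part of the geometric
series `∑ ω^(k+1) q^k` with `ω = e^{2πi/3}`. Hence the integrand is
`(2/√3) ∑_k sin (2π(k+1)/3) (e^{-(s+k)x} - e^{-(s+k+2)x})`, which is integrated termwise by
dominated convergence: the `k`-th term is bounded by `e^{-σx} (1 - q²) q^k` (`σ = Re s`), and these
bounds sum to the integrable function `e^{-σx} (1 + q)`.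
-/

open MeasureTheory Set Real
open scoped Complex

lemma integrableOn_cexp_neg_mul_Ioi_s9 {c : ℂ} (hc : 0 < c.re) :
    IntegrableOn (fun x : ℝ => cexp (-c * x)) (Ioi 0) :=
  integrableOn_exp_mul_complex_Ioi (by simpa) 0

lemma integral_cexp_neg_mul_Ioi_s9 {c : ℂ} (hc : 0 < c.re) :
    ∫ x : ℝ in Ioi 0, cexp (-c * x) = 1 / c := by
  rw [integral_exp_mul_complex_Ioi (by simpa using hc)]
  simp [neg_div_neg_eq]

lemma cexp_neg_add_mul_sub (s : ℂ) (k : ℕ) (x : ℝ) :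
    cexp (-(s + k) * x) - cexp (-(s + k + 2) * x)
      = cexp (-s * x) * ((1 - rexp (-x) ^ 2) * rexp (-x) ^ k : ℝ) := by
  have h (n : ℕ) : cexp (-(s + n) * x) = cexp (-s * x) * (rexp (-x) : ℂ) ^ n := by
    rw [Complex.ofReal_exp, ← Complex.exp_nat_mul, ← Complex.exp_add]
    push_cast
    ring_nf
  have h2 := h (k + 2)
  push_cast at h2
  rw [← add_assoc] at h2
  rw [h, h2]
  push_cast
  ring

theorem hasSum_sin_mul_pow {q : ℝ} (hq : |q| < 1) (θ : ℝ) :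
    HasSum (fun k : ℕ => sin ((k + 1) * θ) * q ^ k) (sin θ / (1 - 2 * q * cos θ + q ^ 2)) := by
  set ω : ℂ := cexp (θ * Complex.I)
  have hω : ‖ω * q‖ < 1 := by simpa [ω, Complex.norm_exp_ofReal_mul_I] using hq
  convert Complex.hasSum_im ((hasSum_geometric_of_norm_lt_one hω).mul_left ω) using 1
  · ext k
    have : ω * (ω * q) ^ k = cexp (((k + 1) * θ : ℝ) * Complex.I) * (q ^ k : ℝ) := by
      push_cast
      rw [mul_pow, ← mul_assoc, ← pow_succ', ← Complex.exp_nat_mul]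
      push_cast
      ring_nf
    rw [this, Complex.im_mul_ofReal, Complex.exp_ofReal_mul_I_im]
  · rw [← div_eq_mul_inv, Complex.div_im, Complex.normSq_apply]
    simp only [ω, Complex.sub_re, Complex.sub_im, Complex.one_re, Complex.one_im, Complex.mul_re,
      Complex.mul_im, Complex.ofReal_re, Complex.ofReal_im, Complex.exp_ofReal_mul_I_re,
      Complex.exp_ofReal_mul_I_im]
    have := sin_sq_add_cos_sq θ
    rw [← sub_div]
    congr 1
    · ring
    · linear_combination (-q ^ 2) * this

lemma sinh_div_cosh_add_half (x : ℝ) :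
    sinh x / (cosh x + 1 / 2) = (1 - rexp (-x) ^ 2) / (1 + rexp (-x) + rexp (-x) ^ 2) := by
  have := exp_pos x
  rw [sinh_eq, cosh_eq, exp_neg]
  field_simp
  ring

lemma abs_sinh_div_cosh_add_half_le_one (x : ℝ) : |sinh x / (cosh x + 1 / 2)| ≤ 1 := by
  have hpos : 0 < cosh x + 1 / 2 := by positivity
  have hlt := sinh_lt_cosh |x|
  rw [abs_div, abs_of_pos hpos, div_le_one hpos, abs_sinh]
  rw [cosh_abs] at hlt
  linarith

lemma integrableOn_cexp_neg_mul_sinh_div_cosh_add_half {s : ℂ} (hs : 0 < s.re) :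
    IntegrableOn (fun x : ℝ => cexp (-s * x) * (sinh x : ℂ) / ((cosh x + 1 / 2 : ℝ) : ℂ))
      (Ioi 0) := by
  have hcont : Continuous fun x : ℝ => ((sinh x / (cosh x + 1 / 2) : ℝ) : ℂ) :=
    Complex.continuous_ofReal.comp (continuous_sinh.div (by fun_prop) fun x => by positivity)
  have hbdd (x : ℝ) : ‖((sinh x / (cosh x + 1 / 2) : ℝ) : ℂ)‖ ≤ 1 := by
    rw [Complex.norm_real, norm_eq_abs]
    exact abs_sinh_div_cosh_add_half_le_one x
  refine IntegrableOn.congr_fun ((integrableOn_cexp_neg_mul_Ioi_s9 hs).bdd_mul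
    hcont.aestronglyMeasurable (ae_of_all _ hbdd)) (fun x _ => by push_cast; ring)
    measurableSet_Ioi

lemma hasSum_sin_two_pi_div_three_mul_cexp_sub (s : ℂ) {x : ℝ} (hx : 0 < x) :
    HasSum (fun k : ℕ => (sin (2 * π * ((k : ℝ) + 1) / 3) : ℂ) *
        (cexp (-(s + k) * x) - cexp (-(s + k + 2) * x)))
      ((√3 / 2 : ℝ) * (cexp (-s * x) * (sinh x : ℂ) / ((cosh x + 1 / 2 : ℝ) : ℂ))) := by
  set q := rexp (-x) with hq_def
  have hq : |q| < 1 := by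
    rw [abs_of_pos (exp_pos _), exp_lt_one_iff]
    linarith
  have hcos : cos (2 * π / 3) = -(1 / 2) := by
    rw [show 2 * π / 3 = π - π / 3 by ring, cos_pi_sub, cos_pi_div_three]
  have hsin : sin (2 * π / 3) = √3 / 2 := by
    rw [show 2 * π / 3 = π - π / 3 by ring, sin_pi_sub, sin_pi_div_three]
  have hden : 1 - 2 * q * cos (2 * π / 3) + q ^ 2 = 1 + q + q ^ 2 := by
    rw [hcos]
    ring
  have hterm : (fun k : ℕ => (sin (2 * π * ((k : ℝ) + 1) / 3) : ℂ) *
        (cexp (-(s + k) * x) - cexp (-(s + k + 2) * x)))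
      = fun k : ℕ => cexp (-s * x) * ((1 - q ^ 2 : ℝ) : ℂ) *
          (sin ((k + 1) * (2 * π / 3)) * q ^ k : ℝ) := by
    ext k
    rw [cexp_neg_add_mul_sub, ← hq_def,
      show 2 * π * ((k : ℝ) + 1) / 3 = (k + 1) * (2 * π / 3) by ring]
    push_cast
    ring
  have hvalue : ((√3 / 2 : ℝ) : ℂ) * (cexp (-s * x) * (sinh x : ℂ) / ((cosh x + 1 / 2 : ℝ) : ℂ))
      = cexp (-s * x) * ((1 - q ^ 2 : ℝ) : ℂ) *
        (sin (2 * π / 3) / (1 - 2 * q * cos (2 * π / 3) + q ^ 2) : ℝ) := by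
    rw [mul_div_assoc, ← Complex.ofReal_div, sinh_div_cosh_add_half, ← hq_def, hden, hsin]
    push_cast
    ring
  rw [hterm, hvalue]
  exact (Complex.hasSum_ofReal.mpr (hasSum_sin_mul_pow hq (2 * π / 3))).mul_left _

theorem hasSum_integral_Ioi_tsum_mul_cexp_sub {a : ℕ → ℂ} {C : ℝ} (ha : ∀ k, ‖a k‖ ≤ C)
    {s : ℂ} (hs : 0 < s.re) :
    HasSum (fun k : ℕ => a k * (1 / (s + k) - 1 / (s + k + 2)))
      (∫ x : ℝ in Ioi 0, ∑' k : ℕ, a k * (cexp (-(s + k) * x) - cexp (-(s + k + 2) * x))) := by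
  set F : ℕ → ℝ → ℂ := fun k x => a k * (cexp (-(s + k) * x) - cexp (-(s + k + 2) * x))
  set bound : ℕ → ℝ → ℝ := fun k x =>
    C * (rexp (-s.re * x) * ((1 - rexp (-x) ^ 2) * rexp (-x) ^ k))
  have hF_int (k : ℕ) : ∫ x in Ioi 0, F k x = a k * (1 / (s + k) - 1 / (s + k + 2)) := by
    have h₁ : 0 < (s + k).re := by
      simp only [Complex.add_re, Complex.natCast_re]
      linarith [(k.cast_nonneg : (0 : ℝ) ≤ k)]
    have h₂ : 0 < (s + k + 2).re := by
      simp only [Complex.add_re, Complex.natCast_re, Complex.re_ofNat]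
      linarith [(k.cast_nonneg : (0 : ℝ) ≤ k)]
    rw [integral_const_mul, integral_sub (integrableOn_cexp_neg_mul_Ioi_s9 h₁)
      (integrableOn_cexp_neg_mul_Ioi_s9 h₂), integral_cexp_neg_mul_Ioi_s9 h₁,
      integral_cexp_neg_mul_Ioi_s9 h₂]
  have hq {x : ℝ} (hx : 0 < x) : 0 < rexp (-x) ∧ rexp (-x) < 1 :=
    ⟨exp_pos _, exp_lt_one_iff.mpr (by linarith)⟩
  have hF_le (k : ℕ) {x : ℝ} (hx : 0 < x) : ‖F k x‖ ≤ bound k x := by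
    obtain ⟨hq₀, hq₁⟩ := hq hx
    have h1 : 0 ≤ (1 - rexp (-x) ^ 2) * rexp (-x) ^ k :=
      mul_nonneg (by nlinarith) (pow_nonneg hq₀.le k)
    have hre : (-s * x).re = -s.re * x := by simp
    simp only [F, bound, cexp_neg_add_mul_sub, norm_mul, Complex.norm_exp, Complex.norm_real,
      norm_of_nonneg h1, hre]
    exact mul_le_mul_of_nonneg_right (ha k) (mul_nonneg (exp_pos _).le h1)
  have h_summable {x : ℝ} (hx : 0 < x) : Summable fun k => bound k x :=
    (((summable_geometric_of_lt_one (hq hx).1.le (hq hx).2).mul_left _).mul_left _).mul_left _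
  have h_tsum : (fun x => ∑' k, bound k x) =ᵐ[volume.restrict (Ioi 0)]
      fun x => C * (rexp (-s.re * x) + rexp (-(s.re + 1) * x)) := by
    filter_upwards [ae_restrict_mem measurableSet_Ioi] with x hx
    obtain ⟨hq₀, hq₁⟩ := hq hx
    have hexp : rexp (-(s.re + 1) * x) = rexp (-s.re * x) * rexp (-x) := by
      rw [← exp_add]
      ring_nf
    simp only [bound, tsum_mul_left, tsum_geometric_of_lt_one hq₀.le hq₁, hexp]
    field_simp [(sub_pos.mpr hq₁).ne']
    ring
  have h_int : Integrable (fun x => ∑' k, bound k x) (volume.restrict (Ioi 0)) :=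
    (((integrableOn_exp_mul_Ioi (by linarith) 0).add
      (integrableOn_exp_mul_Ioi (by linarith) 0)).const_mul C).congr h_tsum.symm
  rw [show (fun k : ℕ => a k * (1 / (s + k) - 1 / (s + k + 2))) = fun k => ∫ x in Ioi 0, F k x
    from funext fun k => (hF_int k).symm]
  refine hasSum_integral_of_dominated_convergence bound
    (fun k => (by fun_prop : Continuous (F k)).aestronglyMeasurable)
    (fun k => (ae_restrict_mem measurableSet_Ioi).mono fun x hx => hF_le k hx)
    ((ae_restrict_mem measurableSet_Ioi).mono fun x hx => h_summable hx) h_int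
    ((ae_restrict_mem measurableSet_Ioi).mono fun x hx => ?_)
  exact ((h_summable hx).of_norm_bounded fun k => hF_le k hx).hasSum

/-- for `Re s > 0`,
`∫₀^∞ e^{-sx} sinh x/(cosh x + 1/2) dx
  = (2/√3) ∑_{k≥1} sin(2πk/3)(1/(s-1+k) - 1/(s+1+k))`;
in particular the integral converges and the series converges. -/
theorem integral_eq_series_third_root (s : ℂ) (hs : 0 < s.re) :
    MeasureTheory.IntegrableOn
      (fun x : ℝ => Complex.exp (-s * (x : ℂ)) * (Real.sinh x : ℂ) /
        ((Real.cosh x + 1 / 2 : ℝ) : ℂ)) (Set.Ioi 0) ∧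
    Summable (fun k : ℕ =>
      ((Real.sin (2 * Real.pi * ((k : ℝ) + 1) / 3) : ℝ) : ℂ) *
        (1 / (s - 1 + ((k : ℂ) + 1)) - 1 / (s + 1 + ((k : ℂ) + 1)))) ∧
    ∫ x in Set.Ioi (0 : ℝ),
        Complex.exp (-s * (x : ℂ)) * (Real.sinh x : ℂ) /
          ((Real.cosh x + 1 / 2 : ℝ) : ℂ)
      = ((2 / Real.sqrt 3 : ℝ) : ℂ) *
        ∑' k : ℕ, ((Real.sin (2 * Real.pi * ((k : ℝ) + 1) / 3) : ℝ) : ℂ) *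
          (1 / (s - 1 + ((k : ℂ) + 1)) - 1 / (s + 1 + ((k : ℂ) + 1))) := by
  have hshift (k : ℕ) : s - 1 + ((k : ℂ) + 1) = s + k ∧ s + 1 + ((k : ℂ) + 1) = s + k + 2 :=
    ⟨by ring, by ring⟩
  simp only [hshift]
  have hsum := hasSum_integral_Ioi_tsum_mul_cexp_sub
    (a := fun k => (sin (2 * π * ((k : ℝ) + 1) / 3) : ℂ)) (C := 1)
    (fun k => by rw [Complex.norm_real, norm_eq_abs]; exact abs_sin_le_one _) hs
  have hpoint : EqOn (fun x : ℝ => cexp (-s * x) * (sinh x : ℂ) / ((cosh x + 1 / 2 : ℝ) : ℂ))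
      (fun x => ((2 / √3 : ℝ) : ℂ) * ∑' k : ℕ, (sin (2 * π * ((k : ℝ) + 1) / 3) : ℂ) *
        (cexp (-(s + k) * x) - cexp (-(s + k + 2) * x))) (Ioi 0) := fun x hx => by
    dsimp only
    rw [(hasSum_sin_two_pi_div_three_mul_cexp_sub s hx).tsum_eq, ← mul_assoc, ← Complex.ofReal_mul,
      div_mul_div_cancel₀ (by positivity), div_self two_ne_zero, Complex.ofReal_one, one_mul]
  refine ⟨?_, hsum.summable, ?_⟩
  · exact integrableOn_cexp_neg_mul_sinh_div_cosh_add_half hs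
  · rw [setIntegral_congr_fun measurableSet_Ioi hpoint, integral_const_mul, hsum.tsum_eq]
end

section
/- Let Λ = ℤ ⊕ ℤτ ⊂ ℂ be a lattice with Im τ > 0, let ψ be a character of Λ, and let k : [1,∞) → ℂ be continuous with |k(t)| ≤ C t^{−4} for some constant C and all t ≥ 1. Then for every A > 0, the sum Σ_{μ∈Λ, μ≠0} (ψ(μ)/|μ|²) · ∫_{|μ|²/(2A²)}^{∞} k(1+u) du converges absolutely and equals ∫₀^∞ k(1+u) · Z(2A²u, Λ, ψ) du. -/
/-!
Write `Z(2A²u)` as a sum over `μ ≠ 0` of `ψ(μ)/|μ|²` times the indicator of `u ≥ |μ|²/(2A²)`,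
and exchange sum and integral. The exchange is justified by absolute convergence:
`∫_b^∞ |k(1+u)| du ≤ C b⁻³/3`, so the `μ`-th term is `O(|μ|⁻⁸)`, and `∑ |mτ + n|⁻⁸` converges
by the Eisenstein series estimate.
-/

/-- `Z(x, Λ, ψ) = ∑_{0 ≠ μ ∈ Λ, |μ|² ≤ x} ψ(μ)/|μ|²` for the lattice
`Λ = ℤ ⊕ ℤτ`, where the lattice point indexed by `(m, n) ∈ ℤ × ℤ` is `mτ + n`. -/
noncomputable def latticeZ (τ : ℂ) (ψ : ℤ × ℤ → ℂ) (x : ℝ) : ℂ :=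
  ∑' mn : ℤ × ℤ,
    if mn ≠ 0 ∧ ‖(mn.1 : ℂ) * τ + (mn.2 : ℂ)‖ ^ 2 ≤ x then
      ψ mn / ((‖(mn.1 : ℂ) * τ + (mn.2 : ℂ)‖ ^ 2 : ℝ) : ℂ)
    else 0

open MeasureTheory Set

theorem summable_inv_norm_lattice_pow {τ : ℂ} (hτ : 0 < τ.im) {n : ℕ} (hn : 3 ≤ n) :
    Summable fun mn : ℤ × ℤ => ‖(mn.1 : ℂ) * τ + mn.2‖⁻¹ ^ n := by
  have h := (finTwoArrowEquiv ℤ).symm.summable_iff.mpr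
    (EisensteinSeries.summable_norm_eisSummand (k := n) (by exact_mod_cast hn) ⟨τ, hτ⟩)
  simpa [Function.comp_def, EisensteinSeries.eisSummand, norm_zpow] using h

section Kernel

variable {E : Type*} [NormedAddCommGroup E] {k : ℝ → E} {C s : ℝ}

theorem integrableOn_Ioi_one_of_norm_le_rpow (hk : ContinuousOn k (Ici 1)) (hs : 1 < s)
    (hbound : ∀ t, 1 ≤ t → ‖k t‖ ≤ C * t ^ (-s)) : IntegrableOn k (Ioi 1) := by
  refine ((integrableOn_Ioi_rpow_of_lt (a := -s) (by linarith) zero_lt_one).const_mul C).mono'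
    ((hk.mono Ioi_subset_Ici_self).aestronglyMeasurable measurableSet_Ioi) ?_
  filter_upwards [ae_restrict_mem measurableSet_Ioi] with t ht using hbound t (le_of_lt ht)

theorem integrableOn_Ioi_zero_comp_one_add (hk : IntegrableOn k (Ioi 1)) :
    IntegrableOn (fun u => k (1 + u)) (Ioi 0) := by
  have h := (measurePreserving_add_left volume (1 : ℝ)).integrableOn_comp_preimage
    (measurableEmbedding_addLeft 1) (f := k) (s := Ioi 1)
  simpa [Function.comp_def] using h.mpr hk

theorem setIntegral_Ioi_norm_comp_one_add_le (hs : 1 < s)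
    (hbound : ∀ t, 1 ≤ t → ‖k t‖ ≤ C * t ^ (-s)) {b : ℝ} (hb : 0 < b) :
    ∫ u in Ioi b, ‖k (1 + u)‖ ≤ C * b ^ (1 - s) / (s - 1) := by
  have hC : 0 ≤ C := by simpa using (norm_nonneg _).trans (hbound 1 le_rfl)
  have hmajor : ∀ u ∈ Ioi b, ‖k (1 + u)‖ ≤ C * u ^ (-s) := fun u hu => by
    have hu : 0 < u := hb.trans hu
    calc ‖k (1 + u)‖ ≤ C * (1 + u) ^ (-s) := hbound _ (by linarith)
      _ ≤ C * u ^ (-s) :=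
        mul_le_mul_of_nonneg_left (Real.rpow_le_rpow_of_nonpos hu (by linarith) (by linarith)) hC
  calc ∫ u in Ioi b, ‖k (1 + u)‖ ≤ ∫ u in Ioi b, C * u ^ (-s) :=
        integral_mono_of_nonneg (.of_forall fun _ => norm_nonneg _)
          ((integrableOn_Ioi_rpow_of_lt (by linarith) hb).const_mul C)
          ((ae_restrict_mem measurableSet_Ioi).mono hmajor)
    _ = C * b ^ (1 - s) / (s - 1) := by
        rw [integral_const_mul, integral_Ioi_rpow_of_lt (by linarith) hb]
        have h1 : 1 - s ≠ 0 := by linarith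
        have h2 : s - 1 ≠ 0 := by linarith
        rw [show -s + 1 = 1 - s by ring]
        field_simp
        ring

end Kernel

theorem setIntegral_Ioi_indicator_Ici {E : Type*} [NormedAddCommGroup E] [NormedSpace ℝ E]
    {a b : ℝ} (hab : a ≤ b) (f : ℝ → E) :
    ∫ u in Ioi a, (Ici b).indicator f u = ∫ u in Ioi b, f u := by
  rw [integral_indicator measurableSet_Ici, Measure.restrict_restrict measurableSet_Ici]
  rcases hab.lt_or_eq with hlt | rfl
  · rw [inter_eq_left.mpr (Ici_subset_Ioi.mpr hlt), integral_Ici_eq_integral_Ioi]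
  · rw [inter_eq_right.mpr Ioi_subset_Ici_self]

theorem hasSum_mul_setIntegral_Ioi {ι 𝕜 : Type*} [Countable ι] [RCLike 𝕜] {g : ℝ → 𝕜}
    {c : ι → 𝕜} {a : ℝ} {b : ι → ℝ} (hg : IntegrableOn g (Ioi a)) (hb : ∀ i, a ≤ b i)
    (hsum : Summable fun i => ‖c i‖ * ∫ u in Ioi (b i), ‖g u‖) :
    HasSum (fun i => c i * ∫ u in Ioi (b i), g u)
      (∫ u in Ioi a, g u * ∑' i, if b i ≤ u then c i else 0) := by
  set f : ι → ℝ → 𝕜 := fun i => (Ici (b i)).indicator fun u => c i * g u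
  have hf_int : ∀ i, Integrable (f i) (volume.restrict (Ioi a)) := fun i =>
    ((Iff.mpr integrableOn_Ici_iff_integrableOn_Ioi
      ((hg.mono_set (Ioi_subset_Ioi (hb i))).const_mul (c i))).integrable_indicator
      measurableSet_Ici).restrict
  have hf_norm : ∀ i, ∫ u in Ioi a, ‖f i u‖ = ‖c i‖ * ∫ u in Ioi (b i), ‖g u‖ := fun i => by
    simp_rw [f, norm_indicator_eq_indicator_norm, setIntegral_Ioi_indicator_Ici (hb i), norm_mul,
      integral_const_mul]
  have hf_integral : ∀ i, ∫ u in Ioi a, f i u = c i * ∫ u in Ioi (b i), g u := fun i => by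
    simp_rw [f, setIntegral_Ioi_indicator_Ici (hb i), integral_const_mul]
  have hf_tsum : ∀ u, ∑' i, f i u = g u * ∑' i, if b i ≤ u then c i else 0 := fun u => by
    simp_rw [← tsum_mul_left, f, indicator_apply, mem_Ici, mul_ite, mul_zero, mul_comm]
  have h := hasSum_integral_of_summable_integral_norm hf_int (hsum.congr fun i => (hf_norm i).symm)
  simpa only [hf_integral, hf_tsum] using h

theorem summable_norm_div_normSq_mul_setIntegral_norm {E : Type*} [NormedAddCommGroup E]
    {τ : ℂ} (hτ : 0 < τ.im) {ψ : ℤ × ℤ → ℂ} (hψ : ∀ a, ‖ψ a‖ ≤ 1) {k : ℝ → E} {C : ℝ}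
    (hbound : ∀ t, 1 ≤ t → ‖k t‖ ≤ C * t ^ (-4 : ℝ)) {A : ℝ} (hA : 0 < A) :
    Summable fun mn : ℤ × ℤ => ‖ψ mn / ((‖(mn.1 : ℂ) * τ + mn.2‖ ^ 2 : ℝ) : ℂ)‖ *
      ∫ u in Ioi (‖(mn.1 : ℂ) * τ + mn.2‖ ^ 2 / (2 * A ^ 2)), ‖k (1 + u)‖ := by
  refine ((summable_inv_norm_lattice_pow hτ (n := 8) (by norm_num)).mul_left
    (C * (2 * A ^ 2) ^ 3 / 3)).of_nonneg_of_le
    (fun _ => mul_nonneg (norm_nonneg _) (integral_nonneg fun _ => norm_nonneg _)) (fun mn => ?_)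
  set r := ‖(mn.1 : ℂ) * τ + mn.2‖
  obtain hr | hr : 0 = r ∨ 0 < r := (norm_nonneg _).eq_or_lt
  · simp [← hr]
  have hb : 0 < r ^ 2 / (2 * A ^ 2) := by positivity
  have hψr : ‖ψ mn / ((r ^ 2 : ℝ) : ℂ)‖ ≤ (r ^ 2)⁻¹ := by
    rw [norm_div, Complex.norm_real, Real.norm_of_nonneg (by positivity), div_eq_mul_inv]
    exact mul_le_of_le_one_left (by positivity) (hψ mn)
  calc ‖ψ mn / ((r ^ 2 : ℝ) : ℂ)‖ * ∫ u in Ioi (r ^ 2 / (2 * A ^ 2)), ‖k (1 + u)‖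
      ≤ (r ^ 2)⁻¹ * (C * (r ^ 2 / (2 * A ^ 2)) ^ (1 - 4 : ℝ) / (4 - 1)) :=
        mul_le_mul hψr (setIntegral_Ioi_norm_comp_one_add_le (by norm_num) hbound hb)
          (integral_nonneg fun _ => norm_nonneg _) (by positivity)
    _ = C * (2 * A ^ 2) ^ 3 / 3 * r⁻¹ ^ 8 := by
        rw [show (1 - 4 : ℝ) = -(3 : ℕ) by norm_num, Real.rpow_neg hb.le, Real.rpow_natCast]
        field_simp
        ring

theorem lattice_sum_eq_integral_general (τ : ℂ) (hτ : 0 < τ.im) (ψ : ℤ × ℤ → ℂ)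
    (habs : ∀ a : ℤ × ℤ, ‖ψ a‖ = 1)
    (k : ℝ → ℂ) (C : ℝ) (hk : ContinuousOn k (Set.Ici 1))
    (hbound : ∀ t : ℝ, 1 ≤ t → ‖k t‖ ≤ C / t ^ 4)
    (A : ℝ) (hA : 0 < A) :
    Summable (fun mn : ℤ × ℤ =>
      ‖if mn = 0 then 0 else
        ψ mn / ((‖(mn.1 : ℂ) * τ + (mn.2 : ℂ)‖ ^ 2 : ℝ) : ℂ) *
          ∫ u in Set.Ioi (‖(mn.1 : ℂ) * τ + (mn.2 : ℂ)‖ ^ 2 / (2 * A ^ 2)),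
            k (1 + u)‖) ∧
    (∑' mn : ℤ × ℤ,
      if mn = 0 then 0 else
        ψ mn / ((‖(mn.1 : ℂ) * τ + (mn.2 : ℂ)‖ ^ 2 : ℝ) : ℂ) *
          ∫ u in Set.Ioi (‖(mn.1 : ℂ) * τ + (mn.2 : ℂ)‖ ^ 2 / (2 * A ^ 2)),
            k (1 + u))
      = ∫ u in Set.Ioi (0 : ℝ), k (1 + u) * latticeZ τ ψ (2 * A ^ 2 * u) := by
  have hbound_rpow : ∀ t, 1 ≤ t → ‖k t‖ ≤ C * t ^ (-4 : ℝ) := fun t ht => by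
    rw [Real.rpow_neg (by linarith), ← div_eq_mul_inv]
    exact_mod_cast hbound t ht
  have hsum :=
    summable_norm_div_normSq_mul_setIntegral_norm hτ (fun a => (habs a).le) hbound_rpow hA
  have hint := integrableOn_Ioi_zero_comp_one_add
    (integrableOn_Ioi_one_of_norm_le_rpow hk (by norm_num) hbound_rpow)
  have hsum_eq := hasSum_mul_setIntegral_Ioi hint (fun mn => by positivity) hsum
  -- at `mn = 0` the summand is `ψ 0 / 0 * _ = 0`, as `x / 0 = 0`
  have hzero : ∀ mn : ℤ × ℤ, ∀ x : ℂ,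
      (if mn = 0 then 0 else ψ mn / ((‖(mn.1 : ℂ) * τ + mn.2‖ ^ 2 : ℝ) : ℂ) * x) =
        ψ mn / ((‖(mn.1 : ℂ) * τ + mn.2‖ ^ 2 : ℝ) : ℂ) * x := fun mn x => by
    split_ifs with h <;> simp [h]
  simp only [hzero]
  refine ⟨hsum.of_nonneg_of_le (fun _ => norm_nonneg _) fun mn => ?_, hsum_eq.tsum_eq.trans ?_⟩
  · exact (norm_mul_le _ _).trans (by gcongr; exact norm_integral_le_integral_norm _)
  refine integral_congr_ae (.of_forall fun u => congrArg (k (1 + u) * ·) (tsum_congr fun mn => ?_))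
  obtain rfl | hmn := eq_or_ne mn 0
  · simp
  · have h2A : (0 : ℝ) < 2 * A ^ 2 := by positivity
    simp only [ne_eq, hmn, not_false_eq_true, true_and, div_le_iff₀ h2A, mul_comm u]

/-- Abel-summation identity.  For a unitary character `ψ` of the
lattice `Λ = ℤ ⊕ ℤτ` (`Im τ > 0`) and a continuous `k` on `[1,∞)` with
`|k(t)| ≤ C t^{-4}`, for every `A > 0` the sum
`∑_{0 ≠ μ ∈ Λ} (ψ(μ)/|μ|²) ∫_{|μ|²/(2A²)}^∞ k(1+u) du` converges absolutely
and equals `∫₀^∞ k(1+u) Z(2A²u, Λ, ψ) du`. -/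
theorem lattice_sum_eq_integral (τ : ℂ) (hτ : 0 < τ.im) (ψ : ℤ × ℤ → ℂ)
    (hadd : ∀ a b : ℤ × ℤ, ψ (a + b) = ψ a * ψ b)
    (habs : ∀ a : ℤ × ℤ, ‖ψ a‖ = 1)
    (k : ℝ → ℂ) (C : ℝ) (hk : ContinuousOn k (Set.Ici 1))
    (hbound : ∀ t : ℝ, 1 ≤ t → ‖k t‖ ≤ C / t ^ 4)
    (A : ℝ) (hA : 0 < A) :
    Summable (fun mn : ℤ × ℤ =>
      ‖if mn = 0 then 0 else
        ψ mn / ((‖(mn.1 : ℂ) * τ + (mn.2 : ℂ)‖ ^ 2 : ℝ) : ℂ) *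
          ∫ u in Set.Ioi (‖(mn.1 : ℂ) * τ + (mn.2 : ℂ)‖ ^ 2 / (2 * A ^ 2)),
            k (1 + u)‖) ∧
    (∑' mn : ℤ × ℤ,
      if mn = 0 then 0 else
        ψ mn / ((‖(mn.1 : ℂ) * τ + (mn.2 : ℂ)‖ ^ 2 : ℝ) : ℂ) *
          ∫ u in Set.Ioi (‖(mn.1 : ℂ) * τ + (mn.2 : ℂ)‖ ^ 2 / (2 * A ^ 2)),
            k (1 + u))
      = ∫ u in Set.Ioi (0 : ℝ), k (1 + u) * latticeZ τ ψ (2 * A ^ 2 * u) :=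
  lattice_sum_eq_integral_general τ hτ ψ habs k C hk hbound A hA
end

section
/- Let H be a complex Hilbert space and A a self-adjoint operator on H with domain D_A ⊆ H. Let v be an eigenpacket of A, and let f ∈ D_A be an eigenvector of A, i.e. A f = c f for some real number c. Then ⟨f, v_λ⟩ = 0 for all λ ∈ ℝ. -/
/-!
Pairing the eigenpacket equation with the eigenvector `f` and moving `A` across by symmetry gives,
for `g λ = ⟪f, v λ⟫`, the integral equation `(λ - c) g λ = ∫₀^λ g`. Away from `λ = c` this makes
`g = (λ - c)⁻¹ ∫₀^λ g` differentiable with derivative `0`; being continuous, `g` is then constant,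
and `g 0 = 0`.
-/

open MeasureTheory intervalIntegral

/-- An *eigenpacket* of a (possibly unbounded) operator `A` on a complex
Hilbert space `H`: a map `v : ℝ → H` with `v 0 = 0`, `v λ ∈ D_A` for all `λ`,
`v` norm-continuous, and `A v_λ = λ v_λ - ∫₀^λ v_μ dμ`. -/
def IsEigenpacket {H : Type*} [NormedAddCommGroup H] [InnerProductSpace ℂ H]
    [CompleteSpace H] (A : H →ₗ.[ℂ] H) (v : ℝ → H) : Prop :=
  v 0 = 0 ∧ (∀ lam : ℝ, v lam ∈ A.domain) ∧ Continuous v ∧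
    ∀ (lam : ℝ) (h : v lam ∈ A.domain),
      A ⟨v lam, h⟩ = (lam : ℂ) • v lam - ∫ μ in (0 : ℝ)..lam, v μ

section IntegralEquation

variable {E : Type*} [NormedAddCommGroup E] [NormedSpace ℝ E] [CompleteSpace E]

theorem eq_of_hasDerivAt_zero_off_countable {g : ℝ → E} (hg : Continuous g) {s : Set ℝ}
    (hs : s.Countable) (hd : ∀ x ∉ s, HasDerivAt g 0 x) (a b : ℝ) : g a = g b := by
  have hftc : ∫ _ in a..b, (0 : E) = g b - g a :=
    integral_eq_of_hasDerivAt_off_countable g (fun _ ↦ 0) hs hg.continuousOn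
      (fun x hx ↦ hd x hx.2) intervalIntegrable_const
  rw [intervalIntegral.integral_zero] at hftc
  exact (sub_eq_zero.mp hftc.symm).symm

theorem hasDerivAt_zero_of_sub_smul_eq_integral {g : ℝ → E} (hg : Continuous g) {a c : ℝ}
    (hgc : ∀ t, (t - c) • g t = ∫ s in a..t, g s) {x : ℝ} (hx : x ≠ c) :
    HasDerivAt g 0 x := by
  have hxc : x - c ≠ 0 := sub_ne_zero.mpr hx
  have hquot : HasDerivAt (fun t ↦ (t - c)⁻¹ • ∫ s in a..t, g s)
      ((x - c)⁻¹ • g x + (-1 / (x - c) ^ 2) • ∫ s in a..x, g s) x :=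
    (((hasDerivAt_id x).sub_const c).inv hxc).smul
      (hg.integral_hasStrictDerivAt a x).hasDerivAt
  have hzero : (x - c)⁻¹ • g x + (-1 / (x - c) ^ 2) • (∫ s in a..x, g s) = 0 := by
    rw [← hgc x, smul_smul, ← add_smul]
    field_simp
    simp
  rw [hzero] at hquot
  refine hquot.congr_of_eventuallyEq ?_
  filter_upwards [isOpen_ne.mem_nhds hx] with t ht
  rw [← hgc t, inv_smul_smul₀ (sub_ne_zero.mpr ht)]

theorem eq_of_sub_smul_eq_integral {g : ℝ → E} (hg : Continuous g) {a c : ℝ}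
    (hgc : ∀ t, (t - c) • g t = ∫ s in a..t, g s) (x y : ℝ) : g x = g y :=
  eq_of_hasDerivAt_zero_off_countable hg (Set.countable_singleton c)
    (fun _ hx ↦ hasDerivAt_zero_of_sub_smul_eq_integral hg hgc hx) x y

end IntegralEquation

theorem sub_smul_inner_eigenpacket_eq_integral {H : Type*} [NormedAddCommGroup H]
    [InnerProductSpace ℂ H] [CompleteSpace H] {A : H →ₗ.[ℂ] H} (hA : A.IsFormalAdjoint A)
    {v : ℝ → H} (hv : IsEigenpacket A v) {f : H} (hf : f ∈ A.domain) {c : ℝ}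
    (hAf : A ⟨f, hf⟩ = (c : ℂ) • f) (lam : ℝ) :
    (lam - c) • inner ℂ f (v lam) = ∫ μ in (0 : ℝ)..lam, inner ℂ f (v μ) := by
  obtain ⟨-, hdom, hcont, heq⟩ := hv
  have hinner_integral :
      inner ℂ f (∫ μ in (0 : ℝ)..lam, v μ) = ∫ μ in (0 : ℝ)..lam, inner ℂ f (v μ) :=
    ((innerSL ℂ f).intervalIntegral_comp_comm (hcont.intervalIntegrable _ _)).symm
  have hsymm := hA ⟨f, hf⟩ ⟨v lam, hdom lam⟩
  rw [hAf, heq lam (hdom lam)] at hsymm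
  simp only [inner_smul_left, Complex.conj_ofReal, inner_sub_right, inner_smul_right,
    hinner_integral] at hsymm
  rw [Complex.real_smul, Complex.ofReal_sub]
  linear_combination -hsymm

/-- if `A` is a self-adjoint (densely defined) operator on a
complex Hilbert space, `v` is an eigenpacket of `A`, and `f ∈ D_A` is an
eigenvector of `A` (with real eigenvalue `c`), then `⟨f, v_λ⟩ = 0` for all
`λ ∈ ℝ`. -/
theorem eigenvector_orthogonal_eigenpacket {H : Type*} [NormedAddCommGroup H]
    [InnerProductSpace ℂ H] [CompleteSpace H]
    (A : H →ₗ.[ℂ] H) (hdense : Dense (A.domain : Set H))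
    (hsa : A.adjoint = A)
    (v : ℝ → H) (hv : IsEigenpacket A v)
    (f : H) (hf : f ∈ A.domain) (c : ℝ)
    (hAf : A ⟨f, hf⟩ = (c : ℂ) • f) :
    ∀ lam : ℝ, (inner ℂ f (v lam) : ℂ) = 0 := by
  have hsymm : A.IsFormalAdjoint A := by
    simpa only [hsa] using LinearPMap.adjoint_isFormalAdjoint hdense (T := A)
  obtain ⟨hv0, -, hcont, -⟩ := id hv
  have hconst := eq_of_sub_smul_eq_integral ((innerSL ℂ f).continuous.comp hcont)
    (sub_smul_inner_eigenpacket_eq_integral hsymm hv hf hAf)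
  intro lam
  simpa [hv0] using hconst lam 0
end

section
/- Let H be a complex Hilbert space, A a self-adjoint operator on H with domain D_A ⊆ H, and v an eigenpacket of A. Then there exists a non-decreasing, right-continuous function F : ℝ → ℝ, unique up to an additive constant, such that F(β) − F(α) = ‖v_β − v_α‖² for all real α ≤ β. -/
/-!
Self-adjointness of `A`, applied to the increments `v b - v x` and `v d - v y`, turns the
eigenpacket equation into the Volterra-type identity
`(y - x) G x y = ∫_x^b G t y dt - ∫_y^d G x s ds` for `G x y = ⟪v b - v x, v d - v y⟫`.
For `x ≤ b < c ≤ y` the factor `y - x` is at least `c - b > 0`, and iterating the resulting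
integral inequality bounds `‖G x y‖` by `M (2 P / (c - b))ⁿ / n!`, where `M` bounds `‖G‖` on
the rectangle and `P = (b - x) + (d - y)`, so `G = 0`: increments of `v` over non-overlapping
intervals are orthogonal. By Pythagoras `‖v β - v α‖²` is then additive in the interval, so it
is the increment of the continuous function equal to `‖v t - v 0‖²` for `t ≥ 0` and to
`-‖v 0 - v t‖²` for `t ≤ 0`.
-/

open MeasureTheory intervalIntegral

open Set Filter Topology Function
open scoped InnerProductSpace Nat

section InnerIntegral

variable {𝕜 E : Type*} [RCLike 𝕜] [NormedAddCommGroup E] [InnerProductSpace 𝕜 E]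
  [NormedSpace ℝ E] [CompleteSpace E] {μ : Measure ℝ} {f : ℝ → E} {a b : ℝ}

theorem inner_intervalIntegral_right (w : E) (hf : IntervalIntegrable f μ a b) :
    ⟪w, ∫ t in a..b, f t ∂μ⟫_𝕜 = ∫ t in a..b, ⟪w, f t⟫_𝕜 ∂μ :=
  ((innerSL 𝕜 w).intervalIntegral_comp_comm hf).symm

theorem inner_intervalIntegral_left (w : E) (hf : IntervalIntegrable f μ a b) :
    ⟪∫ t in a..b, f t ∂μ, w⟫_𝕜 = ∫ t in a..b, ⟪f t, w⟫_𝕜 ∂μ := by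
  rw [← inner_conj_symm, inner_intervalIntegral_right w hf, ← intervalIntegral_conj]
  simp_rw [inner_conj_symm]

end InnerIntegral

section Volterra

variable {f : ℝ → ℝ → ℝ} {a b c d g : ℝ}

theorem integral_sub_add_pow_le (x b : ℝ) {e : ℝ} (he : 0 ≤ e) (n : ℕ) :
    ∫ t in x..b, (b - t + e) ^ n ≤ (b - x + e) ^ (n + 1) / (n + 1) := by
  have hint : ∫ t in x..b, (b - t + e) ^ n = ((b - x + e) ^ (n + 1) - e ^ (n + 1)) / (n + 1) := by
    rw [intervalIntegral.integral_comp_sub_left (fun u => (u + e) ^ n) b,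
      intervalIntegral.integral_comp_add_right (fun u => u ^ n) e, integral_pow]
    ring_nf
  rw [hint]
  gcongr
  exact sub_le_self _ (pow_nonneg he _)

theorem le_mul_pow_succ_of_le_mul_pow (hf : Continuous (uncurry f)) (hg : 0 < g)
    (h : ∀ x ∈ Icc a b, ∀ y ∈ Icc c d,
      g * f x y ≤ (∫ t in x..b, f t y) + ∫ s in y..d, f x s)
    {C : ℝ} (hC : 0 ≤ C) {n : ℕ}
    (hn : ∀ x ∈ Icc a b, ∀ y ∈ Icc c d, f x y ≤ C * (b - x + (d - y)) ^ n) :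
    ∀ x ∈ Icc a b, ∀ y ∈ Icc c d,
      f x y ≤ 2 * C / (g * (n + 1)) * (b - x + (d - y)) ^ (n + 1) := by
  intro x hx y hy
  have hcont₁ : Continuous fun t => f t y := hf.comp (continuous_id.prodMk continuous_const)
  have hcont₂ : Continuous fun s => f x s := hf.comp (continuous_const.prodMk continuous_id)
  have h₁ : ∫ t in x..b, f t y ≤ C * (b - x + (d - y)) ^ (n + 1) / (n + 1) :=
    calc ∫ t in x..b, f t y ≤ ∫ t in x..b, C * (b - t + (d - y)) ^ n :=
          integral_mono_on hx.2 (hcont₁.intervalIntegrable _ _)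
            (Continuous.intervalIntegrable (by fun_prop) _ _)
            fun t ht => hn t ⟨hx.1.trans ht.1, ht.2⟩ y hy
      _ ≤ C * (b - x + (d - y)) ^ (n + 1) / (n + 1) := by
          rw [intervalIntegral.integral_const_mul, mul_div_assoc]
          exact mul_le_mul_of_nonneg_left (integral_sub_add_pow_le x b (sub_nonneg.2 hy.2) n) hC
  have h₂ : ∫ s in y..d, f x s ≤ C * (b - x + (d - y)) ^ (n + 1) / (n + 1) :=
    calc ∫ s in y..d, f x s ≤ ∫ s in y..d, C * (d - s + (b - x)) ^ n :=
          integral_mono_on hy.2 (hcont₂.intervalIntegrable _ _)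
            (Continuous.intervalIntegrable (by fun_prop) _ _)
            fun s hs => (hn x hx s ⟨hy.1.trans hs.1, hs.2⟩).trans_eq (by ring)
      _ ≤ C * (b - x + (d - y)) ^ (n + 1) / (n + 1) := by
          rw [intervalIntegral.integral_const_mul, mul_div_assoc, add_comm (b - x)]
          exact mul_le_mul_of_nonneg_left (integral_sub_add_pow_le y d (sub_nonneg.2 hx.2) n) hC
  have hsum : g * f x y * (n + 1) ≤ 2 * C * (b - x + (d - y)) ^ (n + 1) := by
    rw [← le_div_iff₀ (by positivity)]
    calc g * f x y ≤ (∫ t in x..b, f t y) + ∫ s in y..d, f x s := h x hx y hy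
      _ ≤ _ := add_le_add h₁ h₂
      _ = _ := by ring
  rw [div_mul_eq_mul_div, le_div_iff₀ (by positivity)]
  exact (le_of_eq (by ring)).trans hsum

theorem le_zero_of_mul_le_integral_add_integral (hf : Continuous (uncurry f)) (hg : 0 < g)
    (h : ∀ x ∈ Icc a b, ∀ y ∈ Icc c d,
      g * f x y ≤ (∫ t in x..b, f t y) + ∫ s in y..d, f x s) :
    ∀ x ∈ Icc a b, ∀ y ∈ Icc c d, f x y ≤ 0 := by
  obtain ⟨M, hM⟩ :=
    (isCompact_Icc.prod isCompact_Icc).exists_bound_of_continuousOn hf.continuousOn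
  have hbound : ∀ n : ℕ, ∀ x ∈ Icc a b, ∀ y ∈ Icc c d,
      f x y ≤ max M 0 * (2 / g) ^ n / n ! * (b - x + (d - y)) ^ n := by
    intro n
    induction n with
    | zero =>
      intro x hx y hy
      simpa using (le_abs_self _).trans ((hM (x, y) ⟨hx, hy⟩).trans (le_max_left _ _))
    | succ n ih =>
      intro x hx y hy
      refine (le_mul_pow_succ_of_le_mul_pow hf hg h (by positivity) ih x hx y hy).trans_eq ?_
      rw [Nat.factorial_succ, div_pow, div_pow]
      push_cast
      field_simp
      ring
  intro x hx y hy
  have hlim : Tendsto (fun n : ℕ => max M 0 * (2 / g * (b - x + (d - y))) ^ n / n !)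
      atTop (𝓝 0) := by
    simpa [mul_div_assoc] using
      (FloorSemiring.tendsto_pow_div_factorial_atTop (2 / g * (b - x + (d - y)))).const_mul
        (max M 0)
  exact ge_of_tendsto' hlim fun n => (hbound n x hx y hy).trans_eq (by rw [mul_pow]; ring)

end Volterra

namespace IsEigenpacket

variable {H : Type*} [NormedAddCommGroup H] [InnerProductSpace ℂ H] [CompleteSpace H]
  {A : H →ₗ.[ℂ] H} {v : ℝ → H}

protected theorem continuous (hv : IsEigenpacket A v) : Continuous v :=
  hv.2.2.1

theorem sub_mem_domain (hv : IsEigenpacket A v) (a b : ℝ) : v b - v a ∈ A.domain :=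
  sub_mem (hv.2.1 b) (hv.2.1 a)

theorem apply_sub (hv : IsEigenpacket A v) (a b : ℝ) :
    A ⟨v b - v a, hv.sub_mem_domain a b⟩ = (a : ℂ) • (v b - v a) + ∫ t in a..b, (v b - v t) := by
  obtain ⟨-, hdom, hcont, heq⟩ := hv
  have hsplit : (⟨v b - v a, sub_mem (hdom b) (hdom a)⟩ : A.domain)
      = ⟨v b, hdom b⟩ - ⟨v a, hdom a⟩ := rfl
  have hint : ∫ t in a..b, (v b - v t) = ((b : ℂ) - a) • v b - ∫ t in a..b, v t := by
    rw [intervalIntegral.integral_sub intervalIntegrable_const (hcont.intervalIntegrable a b),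
      intervalIntegral.integral_const, ← Complex.ofReal_sub, Complex.coe_smul]
  rw [hsplit, A.map_sub, heq b, heq a, hint,
    ← intervalIntegral.integral_add_adjacent_intervals (hcont.intervalIntegrable 0 a)
      (hcont.intervalIntegrable a b)]
  module

theorem inner_sub_sub (hv : IsEigenpacket A v) (hA : A.IsFormalAdjoint A) (b d x y : ℝ) :
    ((y : ℂ) - x) * ⟪v b - v x, v d - v y⟫_ℂ
      = (∫ t in x..b, ⟪v b - v t, v d - v y⟫_ℂ) - ∫ s in y..d, ⟪v b - v x, v d - v s⟫_ℂ := by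
  have hcont := hv.continuous
  have h := hA ⟨v b - v x, hv.sub_mem_domain x b⟩ ⟨v d - v y, hv.sub_mem_domain y d⟩
  rw [hv.apply_sub, hv.apply_sub, inner_add_left, inner_smul_left, inner_add_right,
    inner_smul_right, Complex.conj_ofReal,
    inner_intervalIntegral_left (f := fun t => v b - v t) _
      ((continuous_const.sub hcont).intervalIntegrable x b),
    inner_intervalIntegral_right (f := fun s => v d - v s) _
      ((continuous_const.sub hcont).intervalIntegrable y d)] at h
  linear_combination -h

theorem inner_sub_sub_eq_zero_of_lt (hv : IsEigenpacket A v) (hA : A.IsFormalAdjoint A)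
    {a b c d : ℝ} (hab : a ≤ b) (hbc : b < c) (hcd : c ≤ d) :
    ⟪v b - v a, v d - v c⟫_ℂ = 0 := by
  have hcont := hv.continuous
  set G : ℝ → ℝ → ℂ := fun x y => ⟪v b - v x, v d - v y⟫_ℂ
  have hG : Continuous (uncurry fun x y => ‖G x y‖) := by
    simp only [G]
    fun_prop
  refine norm_le_zero_iff.1 <| le_zero_of_mul_le_integral_add_integral hG (sub_pos.2 hbc)
    (fun x hx y hy => ?_) a ⟨le_rfl, hab⟩ c ⟨le_rfl, hcd⟩
  calc (c - b) * ‖G x y‖ ≤ (y - x) * ‖G x y‖ := by gcongr <;> linarith [hx.2, hy.1]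
    _ = ‖((y : ℂ) - x) * G x y‖ := by
        rw [norm_mul, ← Complex.ofReal_sub, Complex.norm_real,
          Real.norm_of_nonneg (by linarith [hx.2, hy.1])]
    _ = ‖(∫ t in x..b, G t y) - ∫ s in y..d, G x s‖ := by rw [hv.inner_sub_sub hA]
    _ ≤ ‖∫ t in x..b, G t y‖ + ‖∫ s in y..d, G x s‖ := norm_sub_le _ _
    _ ≤ (∫ t in x..b, ‖G t y‖) + ∫ s in y..d, ‖G x s‖ :=
        add_le_add (norm_integral_le_integral_norm hx.2) (norm_integral_le_integral_norm hy.2)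

theorem inner_sub_sub_eq_zero (hv : IsEigenpacket A v) (hA : A.IsFormalAdjoint A)
    {a b c d : ℝ} (hab : a ≤ b) (hbc : b ≤ c) (hcd : c ≤ d) :
    ⟪v b - v a, v d - v c⟫_ℂ = 0 := by
  rcases hbc.lt_or_eq with hbc | rfl
  · exact hv.inner_sub_sub_eq_zero_of_lt hA hab hbc hcd
  rcases hcd.lt_or_eq with hbd | rfl
  · have hzero : EqOn (fun y => ⟪v b - v a, v d - v y⟫_ℂ) 0 (Ioc b d) :=
      fun y hy => hv.inner_sub_sub_eq_zero_of_lt hA hab hy.1 hy.2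
    have hcont := hv.continuous
    refine hzero.closure (by fun_prop) continuous_const ?_
    rw [closure_Ioc hbd.ne]
    exact ⟨le_rfl, hbd.le⟩
  · simp

theorem norm_sub_sq_add_norm_sub_sq (hv : IsEigenpacket A v) (hA : A.IsFormalAdjoint A)
    {α β γ : ℝ} (hαβ : α ≤ β) (hβγ : β ≤ γ) :
    ‖v β - v α‖ ^ 2 + ‖v γ - v β‖ ^ 2 = ‖v γ - v α‖ ^ 2 := by
  have h := norm_add_sq_eq_norm_sq_add_norm_sq_of_inner_eq_zero _ _
    (hv.inner_sub_sub_eq_zero hA hαβ le_rfl hβγ)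
  rw [sub_add_sub_cancel'] at h
  rw [sq, sq, sq, h]

end IsEigenpacket

theorem eq_sub_of_additive {Φ : ℝ → ℝ → ℝ}
    (hΦ : ∀ α β γ, α ≤ β → β ≤ γ → Φ α β + Φ β γ = Φ α γ) {α β : ℝ} (h : α ≤ β) :
    Φ α β = (Φ 0 (max β 0) - Φ (min β 0) 0) - (Φ 0 (max α 0) - Φ (min α 0) 0) := by
  have h₀ : Φ 0 0 = 0 := by linarith [hΦ 0 0 0 le_rfl le_rfl]
  rcases le_total 0 α with hα | hα
  · simp only [max_eq_left hα, max_eq_left (hα.trans h), min_eq_right hα,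
      min_eq_right (hα.trans h), h₀]
    linarith [hΦ 0 α β hα h]
  rcases le_total β 0 with hβ | hβ
  · simp only [max_eq_right hα, max_eq_right hβ, min_eq_left hα, min_eq_left hβ, h₀]
    linarith [hΦ α β 0 h hβ]
  · simp only [max_eq_right hα, max_eq_left hβ, min_eq_left hα, min_eq_right hβ, h₀]
    linarith [hΦ α 0 β hα hβ]

/-- for an eigenpacket `v` of a self-adjoint (densely defined)
operator `A` on a complex Hilbert space there is a non-decreasing,
right-continuous `F : ℝ → ℝ`, unique up to an additive constant, with
`F(β) - F(α) = ‖v_β - v_α‖²` for all `α ≤ β`. -/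
theorem eigenpacket_spectral_function {H : Type*} [NormedAddCommGroup H]
    [InnerProductSpace ℂ H] [CompleteSpace H]
    (A : H →ₗ.[ℂ] H) (hdense : Dense (A.domain : Set H))
    (hsa : A.adjoint = A)
    (v : ℝ → H) (hv : IsEigenpacket A v) :
    ∃ F : ℝ → ℝ,
      (Monotone F ∧ (∀ a : ℝ, ContinuousWithinAt F (Set.Ici a) a) ∧
        ∀ α β : ℝ, α ≤ β → F β - F α = ‖v β - v α‖ ^ 2) ∧
      ∀ G : ℝ → ℝ,
        (Monotone G ∧ (∀ a : ℝ, ContinuousWithinAt G (Set.Ici a) a) ∧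
          ∀ α β : ℝ, α ≤ β → G β - G α = ‖v β - v α‖ ^ 2) →
        ∃ c : ℝ, ∀ x : ℝ, G x = F x + c := by
  have hA : A.IsFormalAdjoint A := by
    simpa only [hsa] using LinearPMap.adjoint_isFormalAdjoint hdense
  have hcont := hv.continuous
  set Φ : ℝ → ℝ → ℝ := fun α β => ‖v β - v α‖ ^ 2
  set F : ℝ → ℝ := fun t => Φ 0 (max t 0) - Φ (min t 0) 0
  have hF : ∀ α β : ℝ, α ≤ β → F β - F α = Φ α β := fun α β h =>
    (eq_sub_of_additive (fun _ _ _ => hv.norm_sub_sq_add_norm_sub_sq hA) h).symm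
  have hFcont : Continuous F := by fun_prop
  refine ⟨F, ⟨fun α β h => sub_nonneg.1 ((hF α β h).symm ▸ by positivity),
    fun _ => hFcont.continuousWithinAt, hF⟩, ?_⟩
  rintro G ⟨-, -, hG⟩
  refine ⟨G 0 - F 0, fun x => ?_⟩
  rcases le_total 0 x with h | h
  · linarith [hG 0 x h, hF 0 x h]
  · linarith [hG x 0 h, hF x 0 h]
end
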